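/- arXiv:2512.19518 — 7 statements merged into one kernel-verified Lean document; each statement's English description precedes it below -/
import Mathlib

section
/- Let L be a number field with ring of integers O_L, let w ∈ L^×, and suppose β ∈ L^× satisfies β²w ∈ 1 + 4O_L and β²w·O_L = 𝒜² for an ideal 𝒜 of O_L. Let L′ = L(√w) and fix a square root √w of w in L′. Then the ring of integers O_{L′} equals the O_L-submodule of L′ generated by 1, (1 + β√w)/2, and the set 𝒜^{-1}·β√w (where 𝒜^{-1} is the inverse fractional ideal of 𝒜); that is, O_{L′} = O_L·1 + O_L·(1 + β√w)/2 + 𝒜^{-1}·β√w. -/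
open NumberField
open scoped nonZeroDivisors

section AuxFracIdeal

open Polynomial

variable {R : Type*} [CommRing R] [IsDedekindDomain R] {K : Type*} [Field K]
  [Algebra R K] [IsFractionRing R K]

omit [IsDedekindDomain R] [IsFractionRing R K] in
theorem aux_le_add_left (I J : FractionalIdeal R⁰ K) : I ≤ J + I := by
  rw [← FractionalIdeal.sup_eq_add]; exact le_sup_right

omit [IsDedekindDomain R] [IsFractionRing R K] in
theorem aux_le_add_right (I J : FractionalIdeal R⁰ K) : I ≤ I + J := by
  rw [← FractionalIdeal.sup_eq_add]; exact le_sup_left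

omit [IsDedekindDomain R] [IsFractionRing R K] in
theorem aux_add_le {I J C : FractionalIdeal R⁰ K} (h1 : I ≤ C) (h2 : J ≤ C) : I + J ≤ C := by
  rw [← FractionalIdeal.sup_eq_add]; exact sup_le h1 h2

theorem aux_cancel_le {I J C : FractionalIdeal R⁰ K} (hC : C ≠ 0) (h : I * C ≤ J * C) : I ≤ J := by
  have := mul_left_mono (a := C⁻¹) h
  simpa only [mul_assoc, mul_inv_cancel₀ hC, mul_one] using this

theorem aux_sq_le_one (I : FractionalIdeal R⁰ K) (h : I * I ≤ 1) : I ≤ 1 := by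
  set J := I + 1 with hJ
  have hJ1 : (1 : FractionalIdeal R⁰ K) ≤ J := aux_le_add_left 1 I
  have hJ0 : J ≠ 0 := fun h0 => one_ne_zero (α := FractionalIdeal R⁰ K)
    (FractionalIdeal.le_zero_iff.mp (h0 ▸ hJ1))
  have h1 : J * J ≤ J := by
    rw [hJ, add_mul, mul_add, mul_add, one_mul, mul_one, one_mul]
    exact aux_add_le (aux_add_le (h.trans hJ1) (aux_le_add_right I 1))
      (aux_add_le (aux_le_add_right I 1) (aux_le_add_left 1 I))
  have h2 : J ≤ J * J := by
    calc J = 1 * J := (one_mul J).symm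
    _ ≤ J * J := mul_left_mono (a := J) hJ1
  have hJJ : J * J = J * 1 := by rw [mul_one]; exact le_antisymm h1 h2
  have := mul_left_cancel₀ hJ0 hJJ
  calc I ≤ J := aux_le_add_right I 1
    _ = 1 := this

theorem aux_quad (B C : FractionalIdeal R⁰ K) (hB : B ≠ 0) (h : C * C ≤ B * C + B * B) :
    C ≤ B := by
  have hD0 : C + B ≠ 0 := fun h0 => hB (FractionalIdeal.le_zero_iff.mp (h0 ▸ aux_le_add_left B C))
  have hD : (C + B) * (C + B) ≤ B * (C + B) := by
    rw [add_mul, mul_add, mul_add]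
    refine aux_add_le (aux_add_le h ?_) le_rfl
    rw [mul_comm C B]; exact aux_le_add_right _ _
  exact le_trans (aux_le_add_right C B) (aux_cancel_le hD0 hD)

end AuxFracIdeal

section AuxField

open Polynomial

variable {L L' : Type*} [Field L] [Field L'] [Algebra L L']

theorem aux_decomp (w : L)
    (s : L') (hs : s ^ 2 = algebraMap L L' w) (hgen : Algebra.adjoin L {s} = ⊤)
    (y : L') : ∃ u v : L, y = algebraMap L L' u + algebraMap L L' v * s := by
  have hy : y ∈ Algebra.adjoin L {s} := hgen ▸ Algebra.mem_top
  rw [Algebra.adjoin_singleton_eq_range_aeval] at hy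
  obtain ⟨p, hp⟩ := hy
  have hp' : Polynomial.aeval s p = y := hp
  have hq : (Polynomial.X ^ 2 - Polynomial.C w : Polynomial L).Monic := by
    apply Polynomial.monic_X_pow_sub_C _ (by norm_num)
  have hroot : Polynomial.aeval s (Polynomial.X ^ 2 - Polynomial.C w : Polynomial L) = 0 := by
    simp [hs]
  have key := Polynomial.aeval_modByMonic_eq_self_of_root hroot (p := p)
  set r := p %ₘ (Polynomial.X ^ 2 - Polynomial.C w) with hr
  have hdeg : r.degree ≤ 1 := by
    have hlt := Polynomial.degree_modByMonic_lt p hq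
    have h2 := Polynomial.degree_X_pow_sub_C (n := 2) (by norm_num) w
    rw [h2] at hlt
    rw [← hr] at hlt
    by_cases hr0 : r = 0
    · rw [hr0]; simp
    · rw [Polynomial.degree_eq_natDegree hr0] at hlt ⊢
      have : r.natDegree < 2 := by exact_mod_cast hlt
      exact_mod_cast Nat.lt_succ_iff.mp this
  refine ⟨r.coeff 0, r.coeff 1, ?_⟩
  rw [← hp', ← key]
  conv_lhs => rw [Polynomial.eq_X_add_C_of_degree_le_one hdeg]
  simp only [map_add, map_mul, Polynomial.aeval_C, Polynomial.aeval_X]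
  ring

theorem aux_minpoly (w : L) (s : L')
    (hs : s ^ 2 = algebraMap L L' w) (hsr : s ∉ Set.range (algebraMap L L')) :
    minpoly L s = X ^ 2 - C w := by
  have hq : (X ^ 2 - C w : L[X]).Monic := monic_X_pow_sub_C _ (by norm_num)
  have hroot : Polynomial.aeval s (X ^ 2 - C w : L[X]) = 0 := by simp [hs]
  have hint : IsIntegral L s := ⟨_, hq, hroot⟩
  have hdvd := minpoly.dvd L s hroot
  have hmonic := minpoly.monic hint
  have hdeg2 : (X ^ 2 - C w : L[X]).natDegree = 2 := by
    compute_degree!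
  have hld : (minpoly L s).natDegree ≤ 2 := by
    rw [← hdeg2]; exact natDegree_le_of_dvd hdvd hq.ne_zero
  have hdne1 : (minpoly L s).degree ≠ 1 := by
    intro h
    exact hsr (by simpa [RingHom.mem_range] using (minpoly.degree_eq_one_iff).mp h)
  have hdpos := minpoly.natDegree_pos hint
  have hnd : (minpoly L s).natDegree = 2 := by
    have hne1 : (minpoly L s).natDegree ≠ 1 := fun h1 => hdne1 (by
      rw [degree_eq_natDegree (minpoly.ne_zero hint), h1]; rfl)
    omega
  exact Polynomial.eq_of_monic_of_associated hmonic hq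
    (associated_of_dvd_of_natDegree_le hdvd hq.ne_zero (by omega))

theorem aux_conj (w : L) (s : L')
    (hs : s ^ 2 = algebraMap L L' w) (hgen : Algebra.adjoin L {s} = ⊤)
    (hsr : s ∉ Set.range (algebraMap L L')) :
    ∃ σ : L' →ₐ[L] L', σ s = -s := by
  have hq : (X ^ 2 - C w : L[X]).Monic := monic_X_pow_sub_C _ (by norm_num)
  have hroot : Polynomial.aeval s (X ^ 2 - C w : L[X]) = 0 := by simp [hs]
  have hint : IsIntegral L s := ⟨_, hq, hroot⟩
  let pb : PowerBasis L L' := (Algebra.adjoin.powerBasis hint).map <|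
    (Subalgebra.equivOfEq _ _ hgen).trans Subalgebra.topEquiv
  have hgen' : pb.gen = s := rfl
  have hmin : minpoly L pb.gen = X ^ 2 - C w := by
    rw [hgen']; exact aux_minpoly w s hs hsr
  have hroot' : Polynomial.aeval (-s) (minpoly L pb.gen) = 0 := by
    rw [hmin]; simp [hs]
  exact ⟨pb.lift (-s) hroot', pb.lift_gen (-s) hroot'⟩

theorem aux_un (w : L)
    (s : L') (hs : s ^ 2 = algebraMap L L' w) (hgen : Algebra.adjoin L {s} = ⊤)
    (y : L') (hy : IsIntegral ℤ y) :
    ∃ u v : L, y = algebraMap L L' u + algebraMap L L' v * s ∧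
      IsIntegral ℤ (2 * u) ∧ IsIntegral ℤ (u ^ 2 - v ^ 2 * w) := by
  have hinj : Function.Injective (algebraMap L L') := (algebraMap L L').injective
  by_cases hyr : y ∈ Set.range (algebraMap L L')
  · obtain ⟨z, hz⟩ := hyr
    have hzi : IsIntegral ℤ z := (isIntegral_algebraMap_iff hinj).mp (hz ▸ hy)
    refine ⟨z, 0, by simp [hz.symm], ?_, ?_⟩
    · have := hzi.add hzi
      rwa [show z + z = 2 * z by ring] at this
    · have := hzi.mul hzi
      rwa [show z * z = z ^ 2 - 0 ^ 2 * w by ring] at this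
  · obtain ⟨u, v, huv⟩ := aux_decomp w s hs hgen y
    have hsr : s ∉ Set.range (algebraMap L L') := by
      rintro ⟨r, hr⟩
      exact hyr ⟨u + v * r, by rw [huv, ← hr, map_add, map_mul]⟩
    obtain ⟨σ, hσ⟩ := aux_conj w s hs hgen hsr
    have hσy : σ y = algebraMap L L' u - algebraMap L L' v * s := by
      rw [huv, map_add, map_mul, σ.commutes, σ.commutes, hσ]
      ring
    have hyσi : IsIntegral ℤ (σ y) := hy.map (σ.restrictScalars ℤ)
    refine ⟨u, v, huv, ?_, ?_⟩
    · have h1 : y + σ y = algebraMap L L' (2 * u) := by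
        rw [hσy, huv, map_mul]; push_cast [map_add, map_mul, map_ofNat]; ring
      exact (isIntegral_algebraMap_iff hinj).mp (h1 ▸ hy.add hyσi)
    · have h2 : y * σ y = algebraMap L L' (u ^ 2 - v ^ 2 * w) := by
        rw [hσy, huv]
        simp only [map_sub, map_mul, map_pow]
        linear_combination (-(algebraMap L L' v)^2) * hs
      exact (isIntegral_algebraMap_iff hinj).mp (h2 ▸ hy.mul hyσi)

end AuxField

theorem aux_ideal (L : Type*) [Field L] [NumberField L] (w : L) (hw : w ≠ 0)
    (β : L) (hβ : β ≠ 0) (x : 𝓞 L) (hx : β ^ 2 * w = 1 + 4 * (x : L))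
    (A : Ideal (𝓞 L))
    (hA : FractionalIdeal.spanSingleton (𝓞 L)⁰ (β ^ 2 * w) =
      (A : FractionalIdeal (𝓞 L)⁰ L) ^ 2)
    (u v : L) (h2u : IsIntegral ℤ (2 * u)) (hn : IsIntegral ℤ (u ^ 2 - v ^ 2 * w)) :
    ∃ (m : 𝓞 L) (a : L), a ∈ ((A : FractionalIdeal (𝓞 L)⁰ L))⁻¹ ∧
      (algebraMap (𝓞 L) L m) = 2 * u ∧ a = v / β - u := by
  obtain ⟨m, hm⟩ := IsIntegralClosure.isIntegral_iff (A := 𝓞 L).mp h2u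
  obtain ⟨k, hk⟩ := IsIntegralClosure.isIntegral_iff (A := 𝓞 L).mp hn
  set AI : FractionalIdeal (𝓞 L)⁰ L := (A : FractionalIdeal (𝓞 L)⁰ L) with hAI
  set B : FractionalIdeal (𝓞 L)⁰ L := AI⁻¹ with hB
  have hβw0 : β ^ 2 * w ≠ 0 := by
    simp [pow_ne_zero, hβ, hw]
  have hA0 : AI ≠ 0 := by
    intro h0
    rw [h0] at hA
    simp only [ne_eq, zero_pow, OfNat.ofNat_ne_zero, not_false_eq_true] at hA
    exact hβw0 (FractionalIdeal.spanSingleton_eq_zero_iff.mp hA)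
  have hABone : AI * B = 1 := mul_inv_cancel₀ hA0
  have hB1 : (1 : FractionalIdeal (𝓞 L)⁰ L) ≤ B := by
    calc (1 : FractionalIdeal (𝓞 L)⁰ L) = AI * B := hABone.symm
      _ ≤ 1 * B := mul_left_mono (a := B) FractionalIdeal.coeIdeal_le_one
      _ = B := one_mul B
  have hB0 : B ≠ 0 := fun h0 => one_ne_zero (α := FractionalIdeal (𝓞 L)⁰ L)
    (FractionalIdeal.le_zero_iff.mp (h0 ▸ hB1))
  set E : L := 2 * v / β with hE
  have hE2 : E ^ 2 * (β ^ 2 * w) = algebraMap (𝓞 L) L (m ^ 2 - 4 * k) := by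
    rw [map_sub, map_pow, map_mul, map_ofNat, hm, hk, hE]
    field_simp
    ring
  have hEmem : E ∈ B := by
    have h1 : (FractionalIdeal.spanSingleton (𝓞 L)⁰ E * AI) *
        (FractionalIdeal.spanSingleton (𝓞 L)⁰ E * AI) ≤ 1 := by
      have : (FractionalIdeal.spanSingleton (𝓞 L)⁰ E * AI) *
          (FractionalIdeal.spanSingleton (𝓞 L)⁰ E * AI) =
          FractionalIdeal.spanSingleton (𝓞 L)⁰ (E ^ 2 * (β ^ 2 * w)) := by
        rw [mul_mul_mul_comm, FractionalIdeal.spanSingleton_mul_spanSingleton, ← sq, ← sq, ← hA,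
          FractionalIdeal.spanSingleton_mul_spanSingleton]
      rw [this, FractionalIdeal.spanSingleton_le_iff_mem, hE2]
      exact FractionalIdeal.mem_one_iff _ |>.mpr ⟨m ^ 2 - 4 * k, rfl⟩
    have h2 := aux_sq_le_one _ h1
    have h3 : FractionalIdeal.spanSingleton (𝓞 L)⁰ E ≤ B := by
      rw [hB, FractionalIdeal.inv_eq, FractionalIdeal.le_div_iff_mul_le hA0]
      exact h2
    exact FractionalIdeal.spanSingleton_le_iff_mem.mp h3
  set f : L := (algebraMap (𝓞 L) L m - E) / 2 with hf
  set g : L := (algebraMap (𝓞 L) L m + E) / 2 with hg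
  have hBB1 : (1 : FractionalIdeal (𝓞 L)⁰ L) ≤ B * B := by
    calc (1 : FractionalIdeal (𝓞 L)⁰ L) = 1 * 1 := (one_mul 1).symm
      _ ≤ B * 1 := mul_left_mono (a := 1) hB1
      _ ≤ B * B := mul_right_mono (a := B) hB1
  have hfg : f * g = algebraMap (𝓞 L) L k + E ^ 2 * algebraMap (𝓞 L) L x := by
    have expand : f * g = ((algebraMap (𝓞 L) L m) ^ 2 - E ^ 2) / 4 := by
      rw [hf, hg]; ring
    have key : (algebraMap (𝓞 L) L m) ^ 2 - E ^ 2 =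
        4 * (algebraMap (𝓞 L) L k) + E ^ 2 * (4 * algebraMap (𝓞 L) L x) := by
      have e1 : (algebraMap (𝓞 L) L m) ^ 2 - E ^ 2 * (β ^ 2 * w) =
          4 * algebraMap (𝓞 L) L k := by
        rw [hE2, map_sub, map_pow, map_mul, map_ofNat]; ring
      have e2 : E ^ 2 * (β ^ 2 * w) - E ^ 2 = E ^ 2 * (4 * algebraMap (𝓞 L) L x) := by
        rw [hx]; ring
      linear_combination e1 + e2
    rw [expand, key]; ring
  have hfgmem : f * g ∈ B * B := by
    rw [hfg]
    have h1 : algebraMap (𝓞 L) L k ∈ B * B :=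
      hBB1 (FractionalIdeal.mem_one_iff _ |>.mpr ⟨k, rfl⟩)
    have h2 : E ^ 2 * algebraMap (𝓞 L) L x ∈ B * B := by
      have hEx : E * algebraMap (𝓞 L) L x ∈ B := by
        have : E * algebraMap (𝓞 L) L x ∈ B * 1 :=
          FractionalIdeal.mul_mem_mul hEmem (FractionalIdeal.mem_one_iff _ |>.mpr ⟨x, rfl⟩)
        rwa [mul_one] at this
      have := FractionalIdeal.mul_mem_mul hEmem hEx
      rwa [show E * (E * algebraMap (𝓞 L) L x) = E ^ 2 * algebraMap (𝓞 L) L x by ring] at this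
    exact Submodule.add_mem _ h1 h2
  have hfB : f ∈ B := by
    set C := FractionalIdeal.spanSingleton (𝓞 L)⁰ f with hC
    have hCC : C * C ≤ B * C + B * B := by
      rw [hC, FractionalIdeal.spanSingleton_mul_spanSingleton,
        FractionalIdeal.spanSingleton_le_iff_mem]
      have hffe : f * f = algebraMap (𝓞 L) L m * f - f * g := by
        rw [hf, hg]; ring
      rw [hffe]
      have h1 : algebraMap (𝓞 L) L m * f ∈ B * C :=
        FractionalIdeal.mul_mem_mul (hB1 (FractionalIdeal.mem_one_iff _ |>.mpr ⟨m, rfl⟩))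
          (FractionalIdeal.mem_spanSingleton_self _ f)
      rw [← FractionalIdeal.sup_eq_add]
      exact Submodule.sub_mem _ (Submodule.mem_sup_left h1) (Submodule.mem_sup_right hfgmem)
    exact FractionalIdeal.spanSingleton_le_iff_mem.mp (aux_quad B C hB0 hCC)
  refine ⟨m, -f, ?_, hm, ?_⟩
  · exact Submodule.neg_mem _ hfB
  · rw [hf, hE, hm]
    field_simp
    ring

/-- Let `L` be a number field, `w ∈ L^×`, and suppose `β ∈ L^×`
satisfies `β² w ∈ 1 + 4 𝓞 L` and `β² w · 𝓞 L = 𝒜²` for an ideal `𝒜` of `𝓞 L`.  Let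
`L' = L(√w)` and fix a square root `s = √w` of `w` in `L'`.  Then the ring of integers
of `L'` is the `𝓞 L`-submodule of `L'` generated by `1`, `(1 + β√w)/2` and the set
`𝒜⁻¹ · β√w`. -/
theorem stmt_2 (L : Type*) [Field L] [NumberField L] (w : L) (hw : w ≠ 0)
    (β : L) (hβ : β ≠ 0) (hβw : ∃ x : 𝓞 L, β ^ 2 * w = 1 + 4 * (x : L))
    (A : Ideal (𝓞 L))
    (hA : FractionalIdeal.spanSingleton (𝓞 L)⁰ (β ^ 2 * w) =
      (A : FractionalIdeal (𝓞 L)⁰ L) ^ 2)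
    (L' : Type*) [Field L'] [NumberField L'] [Algebra L L']
    (s : L') (hs : s ^ 2 = algebraMap L L' w) (hgen : Algebra.adjoin L {s} = ⊤) :
    ∀ y : L', IsIntegral ℤ y ↔
      y ∈ Submodule.span (𝓞 L)
        (({1, (1 + algebraMap L L' β * s) / 2} : Set L') ∪
          {y : L' | ∃ a ∈ ((A : FractionalIdeal (𝓞 L)⁰ L))⁻¹,
            y = algebraMap L L' (a * β) * s}) := by
  obtain ⟨x, hx⟩ := hβw
  have hjβ : algebraMap L L' β ≠ 0 := by
    simpa using (map_ne_zero_iff _ (algebraMap L L').injective).mpr hβ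
  intro y
  constructor
  · -- integral → in the span
    intro hy
    obtain ⟨u, v, huv, h2u, hn⟩ := aux_un w s hs hgen y hy
    obtain ⟨m, a, haB, hm, ha⟩ := aux_ideal L w hw β hβ x hx A hA u v h2u hn
    have hy2 : y = m • ((1 + algebraMap L L' β * s) / 2) + algebraMap L L' (a * β) * s := by
      have hsm : m • ((1 + algebraMap L L' β * s) / 2) =
          algebraMap L L' (2 * u) * ((1 + algebraMap L L' β * s) / 2) := by
        rw [Algebra.smul_def, IsScalarTower.algebraMap_apply (𝓞 L) L L', hm]
      rw [huv, hsm, ha]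
      simp only [map_mul, map_sub, map_div₀, map_ofNat]
      field_simp
      ring
    rw [hy2]
    refine Submodule.add_mem _ ?_ ?_
    · refine Submodule.smul_mem _ m (Submodule.subset_span ?_)
      exact Set.mem_union_left _ (by right; rfl)
    · exact Submodule.subset_span (Set.mem_union_right _ ⟨a, haB, rfl⟩)
  · -- span → integral
    intro hy
    have hAIB : (A : FractionalIdeal (𝓞 L)⁰ L)⁻¹ * ((A : FractionalIdeal (𝓞 L)⁰ L)⁻¹ *
        (A : FractionalIdeal (𝓞 L)⁰ L) ^ 2) = 1 := by
      have hβw0 : β ^ 2 * w ≠ 0 := by simp [pow_ne_zero, hβ, hw]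
      have hA0 : (A : FractionalIdeal (𝓞 L)⁰ L) ≠ 0 := by
        intro h0
        rw [h0] at hA
        simp only [ne_eq, zero_pow, OfNat.ofNat_ne_zero, not_false_eq_true] at hA
        exact hβw0 (FractionalIdeal.spanSingleton_eq_zero_iff.mp hA)
      have h1 := mul_inv_cancel₀ hA0
      calc (A : FractionalIdeal (𝓞 L)⁰ L)⁻¹ * ((A : FractionalIdeal (𝓞 L)⁰ L)⁻¹ *
            (A : FractionalIdeal (𝓞 L)⁰ L) ^ 2)
          = ((A : FractionalIdeal (𝓞 L)⁰ L) * (A : FractionalIdeal (𝓞 L)⁰ L)⁻¹) *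
            ((A : FractionalIdeal (𝓞 L)⁰ L) * (A : FractionalIdeal (𝓞 L)⁰ L)⁻¹) := by ring
        _ = 1 := by rw [h1, one_mul]
    refine Submodule.span_induction ?_ isIntegral_zero
      (fun a b _ _ ha hb => ha.add hb) (fun c z _ hz => ?_) hy
    · rintro t (ht | ht)
      · rcases ht with ht | ht
        · rw [ht]; exact isIntegral_one
        · -- t = (1 + βs)/2
          simp only [Set.mem_singleton_iff] at ht
          rw [ht]
          have hx' : algebraMap L L' (β ^ 2 * w) = 1 + 4 * algebraMap (𝓞 L) L' x := by
            rw [hx, map_add, map_mul, map_one, map_ofNat,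
              IsScalarTower.algebraMap_apply (𝓞 L) L L']
          have hint : IsIntegral (𝓞 L) ((1 + algebraMap L L' β * s) / 2) := by
            refine ⟨Polynomial.X ^ 2 - (Polynomial.X + Polynomial.C x), ?_, ?_⟩
            · monicity!
            · simp only [Polynomial.eval₂_sub, Polynomial.eval₂_pow, Polynomial.eval₂_X,
                Polynomial.eval₂_add, Polynomial.eval₂_C]
              have : (algebraMap L L' β * s) ^ 2 = algebraMap L L' (β ^ 2 * w) := by
                rw [map_mul, mul_pow, hs, map_pow]
              linear_combination (1/4 : L') * this + (1/4 : L') * hx'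
          exact isIntegral_trans _ hint
      · -- t = (a β) s with a ∈ A⁻¹
        obtain ⟨a, haB, rfl⟩ := ht
        have hβwA : β ^ 2 * w ∈ (A : FractionalIdeal (𝓞 L)⁰ L) ^ 2 :=
          hA ▸ FractionalIdeal.mem_spanSingleton_self _ _
        have hmem : a * (a * (β ^ 2 * w)) ∈ (1 : FractionalIdeal (𝓞 L)⁰ L) := by
          rw [← hAIB]
          exact FractionalIdeal.mul_mem_mul haB (FractionalIdeal.mul_mem_mul haB hβwA)
        obtain ⟨z, hz⟩ := (FractionalIdeal.mem_one_iff _).mp hmem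
        have hsq : (algebraMap L L' (a * β) * s) ^ 2 = algebraMap (𝓞 L) L' z := by
          rw [IsScalarTower.algebraMap_apply (𝓞 L) L L', hz]
          rw [mul_pow, ← map_pow, hs, ← map_mul]
          congr 1
          ring
        have hzint : IsIntegral ℤ (algebraMap (𝓞 L) L' z) := by
          rw [IsScalarTower.algebraMap_apply (𝓞 L) L L']
          exact (RingOfIntegers.isIntegral_coe z).map (algebraMap L L').toIntAlgHom
        exact IsIntegral.of_pow (by norm_num) (hsq ▸ hzint)
    · -- smul
      have hc : IsIntegral ℤ (algebraMap (𝓞 L) L' c) := by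
        rw [IsScalarTower.algebraMap_apply (𝓞 L) L L']
        exact (RingOfIntegers.isIntegral_coe c).map (algebraMap L L').toIntAlgHom
      rw [Algebra.smul_def]
      exact hc.mul hz
end

section
/- Let L be a number field and let Z(L) = {α ∈ L^× : α·O_L is the square of a fractional ideal of L}. Then: (1) Z(L) is a subgroup of L^×; (2) for every α ∈ Z(L) there exists β ∈ L^× such that αβ² ∈ O_L and the ideal αβ²·O_L is coprime to 2O_L; and (3) if β, β′ ∈ L^× both have this property for a given α ∈ Z(L), then there exists γ ∈ O_L with αβ² ≡ αβ′²·γ² (mod 4O_L), so the images of αβ² and αβ′² in (O_L/4O_L)^× differ by a square in (O_L/4O_L)^×. -/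
open NumberField
open scoped nonZeroDivisors

/-- Auxiliary: in a Dedekind domain, any nonzero ideal `J` has a nonzero element `y`
such that `span {y} = J * K` with `K` coprime to a given proper nonzero ideal `M`. -/
theorem exists_span_singleton_eq_mul_coprime {R : Type*} [CommRing R] [IsDedekindDomain R]
    (J M : Ideal R) (hJ : J ≠ ⊥) (hM0 : M ≠ ⊥) (hM1 : M ≠ ⊤) :
    ∃ (y : R) (K : Ideal R), y ≠ 0 ∧ Ideal.span {y} = J * K ∧ K ⊔ M = ⊤ := by
  classical
  have hJM : J * M ≠ ⊥ := by
    rw [Ne, Ideal.mul_eq_bot]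
    push_neg
    exact ⟨hJ, hM0⟩
  set s := (UniqueFactorizationMonoid.normalizedFactors (J * M)).toFinset with hs
  have hsprime : ∀ P ∈ s, Prime P := fun P hP =>
    UniqueFactorizationMonoid.prime_of_normalized_factor P (Multiset.mem_toFinset.mp hP)
  set e : Ideal R → ℕ := fun P => (UniqueFactorizationMonoid.normalizedFactors J).count P with he
  have hex : ∀ P ∈ s, ∃ x, x ∈ P ^ e P ∧ x ∉ P ^ (e P + 1) := by
    intro P hP
    have hprime := hsprime P hP
    exact Ideal.exists_mem_pow_notMem_pow_succ P hprime.ne_zero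
      (fun h => hprime.not_isUnit (h ▸ Ideal.isUnit_iff.mpr rfl)) (e P)
  choose x hx1 hx2 using hex
  obtain ⟨y, hy⟩ := IsDedekindDomain.exists_forall_sub_mem_ideal (s := s)
    (fun P => P) (fun P => e P + 1) hsprime (fun i _ j _ h => h)
    (fun P => x P.1 P.2)
  have hymem : ∀ P ∈ s, y ∈ P ^ e P := by
    intro P hP
    have h1 := hy P hP
    have : y = (y - x P hP) + x P hP := by ring
    rw [this]
    exact add_mem (Ideal.pow_le_pow_right (Nat.le_succ _) h1) (hx1 P hP)
  have hynot : ∀ P ∈ s, y ∉ P ^ (e P + 1) := by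
    intro P hP h
    exact hx2 P hP (by simpa using sub_mem h (hy P hP))
  have hsne : s.Nonempty := by
    rw [Finset.nonempty_iff_ne_empty]
    intro h
    have h0 : UniqueFactorizationMonoid.normalizedFactors (J * M) = 0 := by
      exact Multiset.toFinset_eq_empty.mp h
    have hprod := prod_normalizedFactors_eq_self hJM
    rw [h0, Multiset.prod_zero] at hprod
    have hle : J * M ≤ M := Ideal.mul_le_right
    rw [← hprod] at hle
    exact hM1 (top_le_iff.mp (by simpa [Ideal.one_eq_top] using hle))
  obtain ⟨P₀, hP₀⟩ := hsne
  have hyne : y ≠ 0 := fun h => hynot P₀ hP₀ (h ▸ zero_mem _)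
  -- J divides span {y}
  have hnfle : UniqueFactorizationMonoid.normalizedFactors J ≤
      UniqueFactorizationMonoid.normalizedFactors (J * M) :=
    (UniqueFactorizationMonoid.dvd_iff_normalizedFactors_le_normalizedFactors hJ hJM).mp
      ⟨M, rfl⟩
  have hsub : (UniqueFactorizationMonoid.normalizedFactors J).toFinset ⊆ s := fun P hP =>
    Multiset.mem_toFinset.mpr (Multiset.mem_of_le hnfle (Multiset.mem_toFinset.mp hP))
  have hJeq : J = ∏ P ∈ (UniqueFactorizationMonoid.normalizedFactors J).toFinset, P ^ e P := by
    conv_lhs => rw [← prod_normalizedFactors_eq_self hJ]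
    exact Finset.prod_multiset_count _
  have hmax : ∀ P ∈ s, (P : Ideal R).IsMaximal := by
    intro P hP
    have hprime := hsprime P hP
    exact (Ideal.isPrime_of_prime hprime).isMaximal hprime.ne_zero
  have hdvd : (∏ P ∈ (UniqueFactorizationMonoid.normalizedFactors J).toFinset, P ^ e P) ∣
      Ideal.span {y} := by
    apply Finset.prod_dvd_of_coprime
    · intro P hP Q hQ hPQ
      have hPs : P ∈ s := hsub (Finset.mem_coe.mp hP)
      have hQs : Q ∈ s := hsub (Finset.mem_coe.mp hQ)
      exact (Ideal.isCoprime_iff_sup_eq.mpr ((hmax P hPs).coprime_of_ne (hmax Q hQs) hPQ)).pow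
    · intro P hP
      rw [Ideal.dvd_span_singleton]
      exact hymem P (hsub hP)
  rw [← hJeq] at hdvd
  obtain ⟨K, hK⟩ := hdvd
  refine ⟨y, K, hyne, hK, ?_⟩
  by_contra hKM
  obtain ⟨Q, hQmax, hQle⟩ := Ideal.exists_le_maximal _ hKM
  have hQprime : Q.IsPrime := hQmax.isPrime
  have hMQ : M ≤ Q := le_trans le_sup_right hQle
  have hKQ : K ≤ Q := le_trans le_sup_left hQle
  have hQbot : Q ≠ ⊥ := fun h => hM0 (le_bot_iff.mp (h ▸ hMQ))
  have hQs : Q ∈ s := by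
    rw [hs, Multiset.mem_toFinset]
    exact (Ideal.mem_normalizedFactors_iff hJM).mpr
      ⟨hQprime, le_trans Ideal.mul_le_right hMQ⟩
  have hQirr : Irreducible Q :=
    (UniqueFactorizationMonoid.irreducible_iff_prime).mpr (hsprime Q hQs)
  have hpow : Q ^ e Q ∣ J := by
    rw [UniqueFactorizationMonoid.dvd_iff_normalizedFactors_le_normalizedFactors
      (pow_ne_zero _ hQbot) hJ, hQirr.normalizedFactors_pow, normalize_eq]
    exact Multiset.le_count_iff_replicate_le.mp le_rfl
  have hdv : Q ^ (e Q + 1) ∣ Ideal.span {y} := by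
    rw [hK, pow_succ]
    exact mul_dvd_mul hpow (Ideal.dvd_iff_le.mpr hKQ)
  exact hynot Q hQs (Ideal.dvd_span_singleton.mp hdv)

theorem not_isUnit_two_ringOfIntegers (L : Type*) [Field L] [NumberField L] :
    ¬ IsUnit (2 : 𝓞 L) := by
  intro h
  rw [NumberField.isUnit_iff_norm] at h
  have h2 : ((2 : 𝓞 L) : L) = algebraMap ℚ L 2 := by
    rw [NumberField.RingOfIntegers.coe_eq_algebraMap, map_ofNat, map_ofNat]
  rw [RingOfIntegers.coe_norm, h2, Algebra.norm_algebraMap] at h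
  have hd : 0 < Module.finrank ℚ L := Module.finrank_pos
  rw [abs_pow, abs_two] at h
  have : (2 : ℚ) ^ Module.finrank ℚ L ≥ 2 ^ 1 :=
    pow_le_pow_right₀ one_le_two hd
  norm_num at this
  rw [h] at this
  norm_num at this

/-- `Z(L)` is the set of `α ∈ L^×` such that `α · 𝓞 L` is the square of a fractional
ideal of `L`. -/
def Zset (L : Type*) [Field L] [NumberField L] : Set L :=
  {α : L | α ≠ 0 ∧ ∃ I : FractionalIdeal (𝓞 L)⁰ L,
    FractionalIdeal.spanSingleton (𝓞 L)⁰ α = I ^ 2}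

/-- (1) `Z(L)` is a subgroup of `L^×`; (2) every `α ∈ Z(L)` admits a
`β ∈ L^×` with `α β² ∈ 𝓞 L` generating an ideal coprime to `2 𝓞 L`; (3) any two such
`β, β'` give values `α β²`, `α β'²` differing multiplicatively by the square of an
element of `𝓞 L` modulo `4 𝓞 L`. -/
theorem stmt_6 (L : Type*) [Field L] [NumberField L] :
    ((1 : L) ∈ Zset L ∧
      (∀ a ∈ Zset L, ∀ b ∈ Zset L, a * b ∈ Zset L) ∧
      (∀ a ∈ Zset L, a⁻¹ ∈ Zset L)) ∧
    (∀ α ∈ Zset L, ∃ β : L, β ≠ 0 ∧ ∃ u : 𝓞 L, (u : L) = α * β ^ 2 ∧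
      Ideal.span {u} ⊔ Ideal.span {(2 : 𝓞 L)} = ⊤) ∧
    (∀ α ∈ Zset L, ∀ β β' : L, β ≠ 0 → β' ≠ 0 → ∀ u u' : 𝓞 L,
      (u : L) = α * β ^ 2 → (u' : L) = α * β' ^ 2 →
      Ideal.span {u} ⊔ Ideal.span {(2 : 𝓞 L)} = ⊤ →
      Ideal.span {u'} ⊔ Ideal.span {(2 : 𝓞 L)} = ⊤ →
      ∃ γ : 𝓞 L, u - u' * γ ^ 2 ∈ Ideal.span {(4 : 𝓞 L)}) := by
  refine ⟨⟨?_, ?_, ?_⟩, ?_, ?_⟩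
  · -- 1 ∈ Zset L
    exact ⟨one_ne_zero, 1, by rw [FractionalIdeal.spanSingleton_one, one_pow]⟩
  · -- closed under multiplication
    rintro a ⟨ha, I, hI⟩ b ⟨hb, J, hJ⟩
    refine ⟨mul_ne_zero ha hb, I * J, ?_⟩
    rw [← FractionalIdeal.spanSingleton_mul_spanSingleton, hI, hJ, mul_pow]
  · -- closed under inverses
    rintro a ⟨ha, I, hI⟩
    refine ⟨inv_ne_zero ha, I⁻¹, ?_⟩
    rw [← FractionalIdeal.spanSingleton_inv, hI, inv_pow]
  · -- part (2)
    rintro α ⟨hα, I, hI⟩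
    have hsα : FractionalIdeal.spanSingleton (𝓞 L)⁰ α ≠ 0 :=
      fun h => hα (FractionalIdeal.spanSingleton_eq_zero_iff.mp h)
    have hI0 : I ≠ 0 := by
      intro h
      rw [h] at hI
      simp at hI
      exact hsα hI
    obtain ⟨a, J, ha, hIJ⟩ := FractionalIdeal.exists_eq_spanSingleton_mul I
    have hJ0 : J ≠ ⊥ := by
      intro h
      rw [h] at hIJ
      simp at hIJ
      exact hI0 hIJ
    have hM0 : Ideal.span {(2 : 𝓞 L)} ≠ ⊥ := by
      rw [Ne, Ideal.span_singleton_eq_bot]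
      exact two_ne_zero
    have hM1 : Ideal.span {(2 : 𝓞 L)} ≠ ⊤ := by
      rw [Ne, Ideal.span_singleton_eq_top]
      exact not_isUnit_two_ringOfIntegers L
    obtain ⟨y, K, hy0, hspan, hcop⟩ :=
      exists_span_singleton_eq_mul_coprime J _ hJ0 hM0 hM1
    set aL : L := algebraMap (𝓞 L) L a with haL_def
    set yL : L := algebraMap (𝓞 L) L y with hyL_def
    have hinj : Function.Injective (algebraMap (𝓞 L) L) := IsFractionRing.injective _ _
    have haL : aL ≠ 0 := by
      simpa [haL_def] using (map_ne_zero_iff _ hinj).mpr ha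
    have hyL : yL ≠ 0 := by
      simpa [hyL_def] using (map_ne_zero_iff _ hinj).mpr hy0
    set β : L := yL / (aL * α) with hβ_def
    have hβ : β ≠ 0 := div_ne_zero hyL (mul_ne_zero haL hα)
    have hmulne : aL ^ 2 * α ≠ 0 := mul_ne_zero (pow_ne_zero _ haL) hα
    -- key identity of fractional ideals
    have h1 : FractionalIdeal.spanSingleton (𝓞 L)⁰ (α * β ^ 2) *
        FractionalIdeal.spanSingleton (𝓞 L)⁰ (aL ^ 2 * α) =
        FractionalIdeal.spanSingleton (𝓞 L)⁰ (yL ^ 2) := by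
      rw [FractionalIdeal.spanSingleton_mul_spanSingleton]
      congr 1
      rw [hβ_def]
      field_simp
    have h2 : ((K ^ 2 : Ideal (𝓞 L)) : FractionalIdeal (𝓞 L)⁰ L) *
        FractionalIdeal.spanSingleton (𝓞 L)⁰ (aL ^ 2 * α) =
        FractionalIdeal.spanSingleton (𝓞 L)⁰ (yL ^ 2) := by
      have hsa : FractionalIdeal.spanSingleton (𝓞 L)⁰ (aL ^ 2 * α) =
          FractionalIdeal.spanSingleton (𝓞 L)⁰ aL ^ 2 *
          FractionalIdeal.spanSingleton (𝓞 L)⁰ α := by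
        rw [FractionalIdeal.spanSingleton_pow, FractionalIdeal.spanSingleton_mul_spanSingleton]
      have hJ2 : FractionalIdeal.spanSingleton (𝓞 L)⁰ aL ^ 2 *
          FractionalIdeal.spanSingleton (𝓞 L)⁰ α =
          ((J ^ 2 : Ideal (𝓞 L)) : FractionalIdeal (𝓞 L)⁰ L) := by
        rw [hI, hIJ, FractionalIdeal.coeIdeal_pow]
        rw [mul_pow, ← mul_assoc, ← mul_pow, FractionalIdeal.spanSingleton_mul_spanSingleton,
          mul_inv_cancel₀ haL, FractionalIdeal.spanSingleton_one, one_pow, one_mul]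
      rw [hsa, hJ2, ← FractionalIdeal.coeIdeal_mul, ← mul_pow, mul_comm K J, ← hspan,
        Ideal.span_singleton_pow, FractionalIdeal.coeIdeal_span_singleton, map_pow]
    have hkey : FractionalIdeal.spanSingleton (𝓞 L)⁰ (α * β ^ 2) =
        ((K ^ 2 : Ideal (𝓞 L)) : FractionalIdeal (𝓞 L)⁰ L) := by
      have hne : FractionalIdeal.spanSingleton (𝓞 L)⁰ (aL ^ 2 * α) ≠ 0 :=
        fun h => hmulne (FractionalIdeal.spanSingleton_eq_zero_iff.mp h)
      exact mul_right_cancel₀ hne (h1.trans h2.symm)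
    have hmem : α * β ^ 2 ∈ ((K ^ 2 : Ideal (𝓞 L)) : FractionalIdeal (𝓞 L)⁰ L) := by
      rw [← hkey]
      exact FractionalIdeal.mem_spanSingleton_self _ _
    rw [FractionalIdeal.mem_coeIdeal] at hmem
    obtain ⟨u, huK, hu⟩ := hmem
    refine ⟨β, hβ, u, hu.symm ▸ rfl, ?_⟩
    have hspanu : Ideal.span {u} = K ^ 2 := by
      apply FractionalIdeal.coeIdeal_injective (K := L)
      show ((Ideal.span {u} : Ideal (𝓞 L)) : FractionalIdeal (𝓞 L)⁰ L) = ((K ^ 2 : Ideal (𝓞 L)) : FractionalIdeal (𝓞 L)⁰ L)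
      rw [FractionalIdeal.coeIdeal_span_singleton, hu, hkey]
    rw [hspanu]
    exact Ideal.isCoprime_iff_sup_eq.mp ((Ideal.isCoprime_iff_sup_eq.mpr hcop).pow_left)
  · -- part (3)
    rintro α ⟨hα, _⟩ β β' hβ hβ' u u' hu hu' hcu hcu'
    set w : L := (u' : L) * (β / β') with hw_def
    have hcoe : ((u * u' : 𝓞 L) : L) = (u : L) * (u' : L) := by push_cast; ring
    have hw2 : w ^ 2 = ((u * u' : 𝓞 L) : L) := by
      rw [hw_def, hcoe, hu, hu']
      field_simp
    have hwint : IsIntegral ℤ w := by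
      apply IsIntegral.of_pow (n := 2) (by norm_num)
      rw [hw2]
      exact NumberField.RingOfIntegers.isIntegral_coe _
    set W : 𝓞 L := ⟨w, hwint⟩ with hW_def
    have hW2 : W ^ 2 = u * u' := by
      apply NumberField.RingOfIntegers.ext
      have hpow : ((W ^ 2 : 𝓞 L) : L) = (W : L) ^ 2 := by push_cast; ring
      rw [hpow]
      exact hw2
    -- coprimality of u' with 4
    have h1mem : (1 : 𝓞 L) ∈ Ideal.span {u'} ⊔ Ideal.span {(2 : 𝓞 L)} := hcu' ▸ trivial
    rw [Submodule.mem_sup] at h1mem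
    obtain ⟨p, hp, q, hq, hpq⟩ := h1mem
    rw [Ideal.mem_span_singleton'] at hp hq
    obtain ⟨c, hc⟩ := hp
    obtain ⟨d, hd⟩ := hq
    have hcd : (1 : 𝓞 L) = u' * c + 2 * d := by
      rw [← hpq, ← hc, ← hd]; ring
    set e : 𝓞 L := c ^ 2 * u' + 4 * c * d with he_def
    set f : 𝓞 L := d ^ 2 with hf_def
    have hef : (1 : 𝓞 L) = u' * e + 4 * f := by
      have h := hcd
      rw [he_def, hf_def]
      linear_combination (1 + u' * c + 2 * d) * h
    refine ⟨e * W, ?_⟩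
    rw [Ideal.mem_span_singleton]
    refine ⟨u * f * (1 + e * u'), ?_⟩
    linear_combination (-(u' * e ^ 2)) * hW2 + (u * (1 + e * u')) * hef
end

section
/- Let N be a number field with a field automorphism ι : N → N such that σ(ι(α)) = conj(σ(α)) for every embedding σ : N → ℂ and α ∈ N, and let L be a subfield of N fixed pointwise by ι. Let q, q′ ∈ N^× satisfy q² ∈ L, q′² ∈ L, q·q′ ∉ L, ι(q) = ±q and ι(q′) = ±q′. Then for all s, s′ ∈ L one has Σ_σ σ(s·q)·conj(σ(s′·q′)) = 0, the sum over all ring embeddings σ : N → ℂ; that is, the subspaces L·q and L·q′ of N are orthogonal for the inner product ⟨α,β⟩ = ½ Σ_σ (σ(α)·conj(σ(β)) + conj(σ(α))·σ(β)). -/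
open Polynomial IntermediateField Module in
private lemma trace_zero_aux (N : Type*) [Field N] [NumberField N]
    (L : Subfield N) (u : N) (hu2 : u ^ 2 ∈ L) (hu : u ∉ L) :
    Algebra.trace (↥L) N u = 0 := by
  have h4 : FiniteDimensional ℚ L := FiniteDimensional.left ℚ L N
  have h3 : FiniteDimensional (↥L) N := FiniteDimensional.right ℚ L N
  set c : L := ⟨u ^ 2, hu2⟩ with hc
  have hint : IsIntegral (↥L) u := Algebra.IsIntegral.isIntegral u
  have haev : Polynomial.aeval u (X ^ 2 - C c : (↥L)[X]) = 0 := by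
    simp only [map_sub, map_pow, aeval_X, aeval_C]
    have : (algebraMap (↥L) N) c = u ^ 2 := rfl
    rw [this, sub_self]
  have hmon : (X ^ 2 - C c : (↥L)[X]).Monic := monic_X_pow_sub_C c two_ne_zero
  have hdvd : minpoly (↥L) u ∣ X ^ 2 - C c := minpoly.dvd _ _ haev
  have hne1 : (minpoly (↥L) u).natDegree ≠ 1 := by
    intro h
    obtain ⟨a, ha⟩ := (minpoly.natDegree_eq_one_iff).mp h
    exact hu (ha ▸ a.2)
  have hdeg2 : (minpoly (↥L) u).natDegree = 2 := by
    have hle : (minpoly (↥L) u).natDegree ≤ 2 := by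
      have := Polynomial.natDegree_le_of_dvd hdvd hmon.ne_zero
      simpa using this
    have hge := minpoly.natDegree_pos hint
    omega
  have heq : minpoly (↥L) u = X ^ 2 - C c :=
    (Polynomial.eq_of_monic_of_dvd_of_natDegree_le (minpoly.monic hint) hmon hdvd
      (by simp [hdeg2])).symm
  have hnext : (minpoly (↥L) u).nextCoeff = 0 := by
    rw [nextCoeff_of_natDegree_pos (by omega), hdeg2, heq]
    simp
  have hgen : Algebra.trace (↥L) (↥(↥L)⟮u⟯) (IntermediateField.AdjoinSimple.gen (↥L) u) = 0 := by
    rw [← IntermediateField.adjoin.powerBasis_gen hint,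
      PowerBasis.trace_gen_eq_nextCoeff_minpoly,
      IntermediateField.adjoin.powerBasis_gen hint, IntermediateField.minpoly_gen, hnext, neg_zero]
  rw [trace_eq_trace_adjoin (↥L) u, hgen, smul_zero]

/-- Let `N` be a number field with automorphism `ι` satisfying
`σ ∘ ι = conj ∘ σ` for all embeddings `σ : N → ℂ`, and `L` a subfield of `N` fixed
pointwise by `ι`.  If `q, q' ∈ N^×` satisfy `q² ∈ L`, `q'² ∈ L`, `q q' ∉ L`,
`ι q = ±q` and `ι q' = ±q'`, then for all `s, s' ∈ L`,
`∑ σ, σ (s q) * conj (σ (s' q')) = 0`; that is, `L·q` and `L·q'` are orthogonal for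
the inner product `⟨α, β⟩ = ½ ∑ σ (σ α * conj (σ β) + conj (σ α) * σ β)`. -/
theorem stmt_13 (N : Type*) [Field N] [NumberField N] (ι : N ≃+* N)
    (hι : ∀ (σ : N →+* ℂ) (α : N), σ (ι α) = starRingEnd ℂ (σ α))
    (L : Subfield N) (hL : ∀ x ∈ L, ι x = x)
    (q q' : N) (hq0 : q ≠ 0) (hq'0 : q' ≠ 0)
    (hq2 : q ^ 2 ∈ L) (hq'2 : q' ^ 2 ∈ L) (hqq' : q * q' ∉ L)
    (hiq : ι q = q ∨ ι q = -q) (hiq' : ι q' = q' ∨ ι q' = -q')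
    (s s' : N) (hs : s ∈ L) (hs' : s' ∈ L) :
    ∑ σ : N →+* ℂ, σ (s * q) * starRingEnd ℂ (σ (s' * q')) = 0 := by
  rcases eq_or_ne s 0 with rfl | hs0
  · simp
  rcases eq_or_ne s' 0 with rfl | hs'0
  · simp
  have h4 : FiniteDimensional ℚ L := FiniteDimensional.left ℚ L N
  have h3 : FiniteDimensional (↥L) N := FiniteDimensional.right ℚ L N
  set t : N := s * s' * (q * q') with ht
  have htL : t ∉ L := fun h => by
    have hss : s * s' ∈ L := L.mul_mem hs hs'
    have : q * q' = (⟨s * s', hss⟩ : L)⁻¹ * t := by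
      have : (s * s') ≠ 0 := mul_ne_zero hs0 hs'0
      show q * q' = (s * s')⁻¹ * (s * s' * (q * q'))
      rw [← mul_assoc, inv_mul_cancel₀ this, one_mul]
    rw [this] at hqq'
    exact hqq' (L.mul_mem (Subfield.inv_mem L hss) h)
  have htsq : t ^ 2 ∈ L := by
    have : t ^ 2 = (s ^ 2) * (s' ^ 2) * (q ^ 2 * q' ^ 2) := by ring
    rw [this]
    exact L.mul_mem (L.mul_mem (L.pow_mem hs 2) (L.pow_mem hs' 2)) (L.mul_mem hq2 hq'2)
  have htr : Algebra.trace (↥L) N t = 0 := trace_zero_aux N L t htsq htL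
  have htrQ : Algebra.trace ℚ N t = 0 := by
    rw [← Algebra.trace_trace (S := ↥L), htr, map_zero]
  -- rewrite the sum as ± trace
  have key : ∀ σ : N →+* ℂ, σ (s * q) * starRingEnd ℂ (σ (s' * q')) = σ (s * q * (s' * ι q')) := by
    intro σ
    rw [← hι, ← map_mul]
    congr 1
    rw [map_mul ι, hL s' hs']
  rw [Finset.sum_congr rfl fun σ _ => key σ]
  have hsum : ∑ σ : N →+* ℂ, σ t = 0 := by
    have := trace_eq_sum_embeddings (K := ℚ) (L := N) (E := ℂ) (x := t)
    rw [htrQ, map_zero] at this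
    rw [Fintype.sum_equiv (RingHom.equivRatAlgHom N ℂ) (fun σ => σ t) (fun σ => σ t)
      (fun σ => rfl)]
    exact this.symm
  rcases hiq' with h | h
  · have : s * q * (s' * ι q') = t := by rw [h, ht]; ring
    rw [this] at *
    simpa using hsum
  · have : s * q * (s' * ι q') = -t := by rw [h, ht]; ring
    simp only [this, map_neg]
    rw [Finset.sum_neg_distrib]
    simpa using hsum
end

section
/- Let V be a finite-dimensional real vector space with a direct sum decomposition V = ⊕_{j=1}^k V_j. For each j let (b_{j,1},…,b_{j,d_j}) be an ℝ-basis of V_j, and let m_{j,i} ∈ V be vectors of the form m_{j,i} = b_{j,i} + v_{j,i} with v_{j,i} ∈ ⊕_{j′<j} V_{j′}. Let M be the additive subgroup of V generated by all the m_{j,i}, and let D = {Σ_{j,i} r_{j,i} b_{j,i} : 0 ≤ r_{j,i} < 1 for all j,i}. Then D is an exact fundamental domain for the translation action of M on V: every x ∈ V can be written uniquely as x = m + d with m ∈ M and d ∈ D. -/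
open Finset in
private lemma keyLemma14 {ι : Type*} [Fintype ι] [DecidableEq ι] (ρ : ι → ℕ) (A : ι → ι → ℝ)
    (hdiag : ∀ p, A p p = 1)
    (htri : ∀ q p, ρ q ≤ ρ p → q ≠ p → A q p = 0) :
    ∀ (k : ℕ) (x : ι → ℝ), ∃! n : ι → ℤ,
      (∀ p, ρ p < k → x p - ∑ q, (n q : ℝ) * A q p ∈ Set.Ico (0:ℝ) 1) ∧
      (∀ p, ¬ ρ p < k → n p = 0) := by
  intro k
  induction k with
  | zero =>
    intro x
    refine ⟨0, ⟨fun p hp => absurd hp (Nat.not_lt_zero _), fun p _ => rfl⟩, ?_⟩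
    rintro n ⟨_, h2⟩
    funext p; exact h2 p (Nat.not_lt_zero _)
  | succ k ih =>
    intro x
    set x' : ι → ℝ := fun p => x p - ∑ q, (if ρ q = k then (⌊x q⌋ : ℝ) * A q p else 0) with hx'
    obtain ⟨n', ⟨hn'1, hn'2⟩, hn'uniq⟩ := ih x'
    set n : ι → ℤ := fun p => if ρ p = k then ⌊x p⌋ else n' p with hn
    have hn'k : ∀ q, ρ q = k → n' q = 0 := fun q hq => hn'2 q (by omega)
    have hsum : ∀ p, ∑ q, (n q : ℝ) * A q p
        = ∑ q, (if ρ q = k then (⌊x q⌋ : ℝ) * A q p else 0) + ∑ q, (n' q : ℝ) * A q p := by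
      intro p
      rw [← Finset.sum_add_distrib]
      refine Finset.sum_congr rfl fun q _ => ?_
      by_cases hq : ρ q = k
      · simp [hn, hq, hn'k q hq]
      · simp [hn, hq]
    have htop : ∀ (m : ι → ℤ), (∀ q, ¬ ρ q < k + 1 → m q = 0) → ∀ p, ρ p = k →
        ∑ q, (m q : ℝ) * A q p = m p := by
      intro m hm p hp
      rw [Finset.sum_eq_single p]
      · rw [hdiag p, mul_one]
      · intro q _ hqp
        by_cases hq : ρ q ≤ k
        · rw [htri q p (by omega) hqp, mul_zero]
        · rw [hm q (by omega)]; simp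
      · intro h; exact absurd (Finset.mem_univ p) h
    refine ⟨n, ⟨?_, ?_⟩, ?_⟩
    · intro p hp
      by_cases hpk : ρ p = k
      · have : ∀ q, ¬ ρ q < k + 1 → n q = 0 := by
          intro q hq; simp only [hn]; rw [if_neg (by omega)]; exact hn'2 q (by omega)
        rw [htop n this p hpk]
        have : n p = ⌊x p⌋ := by simp [hn, hpk]
        rw [this]
        exact ⟨by simpa using Int.fract_nonneg (x p),
          by simpa [Int.self_sub_floor] using Int.fract_lt_one (x p)⟩
      · have hplt : ρ p < k := by omega
        have := hn'1 p hplt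
        rw [hsum p]
        simpa [hx', sub_sub] using this
    · intro p hp
      simp only [hn]
      rw [if_neg (by omega)]
      exact hn'2 p (by omega)
    · rintro m ⟨h1, h2⟩
      have hmk : ∀ p, ρ p = k → m p = ⌊x p⌋ := by
        intro p hp
        have := h1 p (by omega)
        rw [htop m h2 p hp] at this
        obtain ⟨ha, hb⟩ := this
        exact (Int.floor_eq_iff.mpr ⟨by linarith, by linarith⟩).symm
      set mt : ι → ℤ := fun p => if ρ p = k then 0 else m p with hmt
      have hmsum : ∀ p, ∑ q, (m q : ℝ) * A q p
          = ∑ q, (if ρ q = k then (⌊x q⌋ : ℝ) * A q p else 0) + ∑ q, (mt q : ℝ) * A q p := by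
        intro p
        rw [← Finset.sum_add_distrib]
        refine Finset.sum_congr rfl fun q _ => ?_
        by_cases hq : ρ q = k
        · simp [hmt, hq, hmk q hq]
        · simp [hmt, hq]
      have heq : mt = n' := by
        refine hn'uniq mt ⟨?_, ?_⟩
        · intro p hp
          have := h1 p (by omega)
          rw [hmsum p] at this
          simpa [hx', sub_sub] using this
        · intro p hp
          by_cases hpk : ρ p = k
          · simp [hmt, hpk]
          · simp only [hmt]; rw [if_neg hpk]; exact h2 p (by omega)
      funext p
      by_cases hpk : ρ p = k
      · simp [hn, hpk, hmk p hpk]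
      · have : mt p = n' p := by rw [heq]
        simp only [hmt, if_neg hpk] at this
        simp [hn, hpk, this]


/-- Let `V = ⊕_{j=1}^k V_j` be a finite-dimensional real vector
space, `b j` a basis of `V_j` for each `j`, and `m j i = b j i + v j i` with
`v j i ∈ ⊕_{j' < j} V_{j'}`.  Let `M` be the additive subgroup generated by the
`m j i` and `D = {∑ r_{j,i} b j i : 0 ≤ r_{j,i} < 1}`.  Then every `x ∈ V` is uniquely
`x = m + d` with `m ∈ M` and `d ∈ D`. -/
theorem stmt_14 (V : Type*) [AddCommGroup V] [Module ℝ V] [FiniteDimensional ℝ V]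
    (k : ℕ) (Vj : Fin k → Submodule ℝ V) (hdirect : DirectSum.IsInternal Vj)
    (d : Fin k → ℕ) (b : (j : Fin k) → Fin (d j) → V)
    (hbmem : ∀ j i, b j i ∈ Vj j)
    (hbind : ∀ j, LinearIndependent ℝ (b j))
    (hbspan : ∀ j, Submodule.span ℝ (Set.range (b j)) = Vj j)
    (v : (j : Fin k) → Fin (d j) → V)
    (hv : ∀ j i, v j i ∈ ⨆ j' : {j' : Fin k // j' < j}, Vj j')
    (msys : (j : Fin k) → Fin (d j) → V)
    (hmsys : ∀ j i, msys j i = b j i + v j i)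
    (M : AddSubgroup V)
    (hM : M = AddSubgroup.closure (⋃ j : Fin k, Set.range (msys j)))
    (D : Set V)
    (hD : D = {x : V | ∃ r : (j : Fin k) → Fin (d j) → ℝ,
      (∀ j i, 0 ≤ r j i ∧ r j i < 1) ∧ x = ∑ j, ∑ i, r j i • b j i}) :
    ∀ x : V, ∃! md : V × V, md.1 ∈ M ∧ md.2 ∈ D ∧ x = md.1 + md.2 := by
  classical
  -- per-piece bases
  set bsub : (j : Fin k) → Fin (d j) → Vj j := fun j i => ⟨b j i, hbmem j i⟩ with hbsub
  have hbind' : ∀ j, LinearIndependent ℝ (bsub j) := by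
    intro j
    apply LinearIndependent.of_comp (Vj j).subtype
    exact hbind j
  have hbspan' : ∀ j, ⊤ ≤ Submodule.span ℝ (Set.range (bsub j)) := by
    intro j
    refine le_of_eq ?_
    refine (Submodule.map_injective_of_injective (Vj j).injective_subtype ?_).symm
    rw [Submodule.map_span, Submodule.map_top, Submodule.range_subtype, ← Set.range_comp]
    exact (hbspan j).symm ▸ rfl
  set bj : (j : Fin k) → Module.Basis (Fin (d j)) ℝ (Vj j) :=
    fun j => Module.Basis.mk (hbind' j) (hbspan' j) with hbj
  set B := hdirect.collectedBasis bj with hB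
  have hBapp : ∀ p : (j : Fin k) × Fin (d j), B p = b p.1 p.2 := by
    intro p
    rw [hB, hdirect.collectedBasis_coe]
    simp [hbj, hbsub]
  have : True := trivial
  -- support of v
  have hvrepr : ∀ (j : Fin k) (i : Fin (d j)) (p : ((j : Fin k) × Fin (d j))), (j : ℕ) ≤ (p.1 : ℕ) →
      B.repr (v j i) p = 0 := by
    intro j i p hp
    have hmem : v j i ∈ Submodule.span ℝ (B '' {p : ((j : Fin k) × Fin (d j)) | (p.1 : ℕ) < (j : ℕ)}) := by
      refine (iSup_le (fun j' => ?_) : _ ≤ Submodule.span ℝ (B '' {p : ((j : Fin k) × Fin (d j)) | (p.1 : ℕ) < (j : ℕ)})) (hv j i)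
      rw [← hbspan j'.1]
      refine Submodule.span_le.mpr ?_
      rintro _ ⟨i', rfl⟩
      exact Submodule.subset_span ⟨⟨j'.1, i'⟩, j'.2, (hBapp ⟨j'.1, i'⟩)⟩
    have := B.mem_span_image.mp hmem
    by_contra h
    have hps : p ∈ (B.repr (v j i)).support := Finsupp.mem_support_iff.mpr h
    have := this hps
    simp only [Set.mem_setOf_eq] at this
    omega
  -- the matrix
  set A : ((j : Fin k) × Fin (d j)) → ((j : Fin k) × Fin (d j)) → ℝ := fun q p => B.repr (msys q.1 q.2) p with hA
  have hArepr : ∀ (q p : ((j : Fin k) × Fin (d j))), A q p = (Finsupp.single q (1:ℝ)) p + B.repr (v q.1 q.2) p := by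
    intro q p
    rw [hA]
    simp only
    rw [hmsys, map_add, ← hBapp q, B.repr_self]
    rfl
  have hdiag : ∀ p : ((j : Fin k) × Fin (d j)), A p p = 1 := by
    intro p
    rw [hArepr, hvrepr p.1 p.2 p le_rfl, Finsupp.single_eq_same]
    ring
  have htri : ∀ q p : ((j : Fin k) × Fin (d j)), (q.1 : ℕ) ≤ (p.1 : ℕ) → q ≠ p → A q p = 0 := by
    intro q p hqp hne
    rw [hArepr, hvrepr q.1 q.2 p hqp, Finsupp.single_eq_of_ne (Ne.symm ?_)]
    · ring
    · exact fun h => hne (by simp [h])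
  -- repr of x - sum
  have hreprsub : ∀ (x : V) (n : ((j : Fin k) × Fin (d j)) → ℤ) (p : ((j : Fin k) × Fin (d j))),
      B.repr (x - ∑ q : ((j : Fin k) × Fin (d j)), n q • msys q.1 q.2) p = B.repr x p - ∑ q : ((j : Fin k) × Fin (d j)), (n q : ℝ) * A q p := by
    intro x n p
    rw [map_sub, map_sum, Finsupp.sub_apply, Finsupp.coe_finset_sum, Finset.sum_apply]
    congr 1
    refine Finset.sum_congr rfl fun q _ => ?_
    rw [map_zsmul, Finsupp.coe_smul, Pi.smul_apply, zsmul_eq_mul, hA]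
  -- the generating set as a range over sigma
  have hset : (⋃ j : Fin k, Set.range (msys j)) = Set.range (fun p : ((j : Fin k) × Fin (d j)) => msys p.1 p.2) := by
    ext y
    simp only [Set.mem_iUnion, Set.mem_range]
    constructor
    · rintro ⟨j, i, rfl⟩; exact ⟨⟨j, i⟩, rfl⟩
    · rintro ⟨⟨j, i⟩, rfl⟩; exact ⟨j, i, rfl⟩
  have hMmem : ∀ n : ((j : Fin k) × Fin (d j)) → ℤ, (∑ q : ((j : Fin k) × Fin (d j)), n q • msys q.1 q.2) ∈ M := by
    intro n
    refine AddSubgroup.sum_mem M fun q _ => AddSubgroup.zsmul_mem M ?_ _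
    rw [hM]
    exact AddSubgroup.subset_closure (Set.mem_iUnion.mpr ⟨q.1, ⟨q.2, rfl⟩⟩)
  -- double sum conversion
  have hdouble : ∀ r : (j : Fin k) → Fin (d j) → ℝ,
      ∑ j, ∑ i, r j i • b j i = ∑ p : ((j : Fin k) × Fin (d j)), r p.1 p.2 • B p := by
    intro r
    rw [← Finset.univ_sigma_univ, Finset.sum_sigma]
    exact Finset.sum_congr rfl fun j _ => Finset.sum_congr rfl fun i _ => by rw [hBapp ⟨j, i⟩]
  -- main argument
  intro x
  obtain ⟨n, ⟨hn1, _⟩, hnuniq⟩ := keyLemma14 (fun p : ((j : Fin k) × Fin (d j)) => (p.1 : ℕ)) A hdiag htri k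
    (fun p => B.repr x p)
  set m := ∑ q : ((j : Fin k) × Fin (d j)), n q • msys q.1 q.2 with hm
  refine ⟨(m, x - m), ⟨hMmem n, ?_, by simp⟩, ?_⟩
  · rw [hD]
    refine ⟨fun j i => B.repr (x - m) ⟨j, i⟩, fun j i => ?_, ?_⟩
    · have := hn1 ⟨j, i⟩ j.isLt
      rw [← hreprsub x n ⟨j, i⟩] at this
      exact ⟨this.1, this.2⟩
    · rw [hdouble]
      exact (B.sum_repr (x - m)).symm
  · rintro ⟨m', d'⟩ ⟨hm', hd', hx'⟩
    simp only at hm' hd' hx' ⊢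
    rw [hM, hset, ← Submodule.span_int_eq_addSubgroupClosure] at hm'
    obtain ⟨n', hn'⟩ := (Submodule.mem_span_range_iff_exists_fun ℤ).mp hm'
    have hd'x : d' = x - m' := by rw [hx']; abel
    rw [hD] at hd'
    obtain ⟨r, hr, hrd⟩ := hd'
    have hreprd' : ∀ p : ((j : Fin k) × Fin (d j)), B.repr d' p = r p.1 p.2 := by
      intro p
      rw [hrd, hdouble]
      rw [B.repr_sum_self]
    have hn'cond : ∀ p : ((j : Fin k) × Fin (d j)), B.repr x p - ∑ q : ((j : Fin k) × Fin (d j)), (n' q : ℝ) * A q p ∈ Set.Ico (0:ℝ) 1 := by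
      intro p
      rw [← hreprsub x n' p, hn', ← hd'x, hreprd']
      exact ⟨(hr p.1 p.2).1, (hr p.1 p.2).2⟩
    have : n' = n := hnuniq n' ⟨fun p _ => hn'cond p, fun p hp => absurd p.1.isLt hp⟩
    have hm'm : m' = m := by rw [← hn', this]
    rw [hm'm, hd'x, hm'm]
end

section
/- Let L be a totally real number field of degree d, let N be a number field containing L, and let q ∈ N be a nonzero element such that q² is a unit of O_L. Then there exists a nonzero h ∈ O_L such that |σ(h·q)| ≤ |Δ_L|^{1/(2d)} for every ring embedding σ : N → ℂ. -/
open NumberField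

open NumberField.InfinitePlace NumberField.mixedEmbedding MeasureTheory Module in
private lemma stmt15_auxA {L : Type*} [Field L] [NumberField L]
    (hreal : ∀ w : InfinitePlace L, w.IsReal)
    (f : InfinitePlace L → NNReal)
    (hf : NNReal.sqrt ‖NumberField.discr L‖₊ < ∏ w, f w ^ (InfinitePlace.mult w)) :
    ∃ a : 𝓞 L, a ≠ 0 ∧ ∀ w : InfinitePlace L, w a < f w := by
  classical
  apply exists_ne_zero_mem_ringOfIntegers_lt (f := f)
  rw [convexBodyLT_volume, minkowskiBound,
    volume_fundamentalDomain_fractionalIdealLatticeBasis,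
    volume_fundamentalDomain_latticeBasis]
  have h0 : nrComplexPlaces L = 0 := by
    rw [Fintype.card_eq_zero_iff]
    exact ⟨fun w => (not_isReal_iff_isComplex.mpr w.2) (hreal w.1)⟩
  have hr : nrRealPlaces L = finrank ℚ L := by
    have := card_add_two_mul_card_eq_rank L
    omega
  rw [h0, pow_zero, one_mul, Units.val_one, FractionalIdeal.absNorm_one, Rat.cast_one,
    ENNReal.ofReal_one, one_mul, mixedEmbedding.finrank]
  have hfac : (convexBodyLTFactor L : ENNReal) = (2 : ENNReal) ^ finrank ℚ L := by
    rw [convexBodyLTFactor, h0, pow_zero, mul_one, hr]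
    push_cast
    rfl
  rw [hfac]
  rw [mul_comm ((2 : ENNReal) ^ finrank ℚ L)]
  refine (ENNReal.mul_lt_mul_iff_left (by positivity) (by exact ENNReal.pow_ne_top ENNReal.ofNat_ne_top)).mpr ?_
  exact_mod_cast hf

open NumberField.InfinitePlace Module in
private lemma stmt15_auxB {L : Type*} [Field L] [NumberField L]
    (hreal : ∀ w : InfinitePlace L, w.IsReal)
    (f : InfinitePlace L → NNReal) (hf0 : ∀ w, f w ≠ 0)
    (hf : NNReal.sqrt ‖NumberField.discr L‖₊ ≤ ∏ w, f w ^ (InfinitePlace.mult w)) :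
    ∃ a : 𝓞 L, a ≠ 0 ∧ ∀ w : InfinitePlace L, (w a : ℝ) ≤ f w := by
  classical
  have hd : 0 < finrank ℚ L := finrank_pos
  have hdiscr : (0 : NNReal) < NNReal.sqrt ‖NumberField.discr L‖₊ := by
    rw [NNReal.sqrt_pos, nnnorm_pos]
    exact_mod_cast NumberField.discr_ne_zero L
  have key : ∀ n : ℕ, ∃ a : 𝓞 L, a ≠ 0 ∧
      ∀ w : InfinitePlace L, (w a : ℝ) < (f w : ℝ) * (1 + ((n : ℝ) + 1)⁻¹) := by
    intro n
    set c : NNReal := 1 + ((n : NNReal) + 1)⁻¹ with hc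
    have hc1 : 1 < c := by
      rw [hc]
      have : (0 : NNReal) < ((n : NNReal) + 1)⁻¹ := by positivity
      exact lt_add_of_pos_right 1 this
    have hlt : NNReal.sqrt ‖NumberField.discr L‖₊ < ∏ w, (f w * c) ^ (InfinitePlace.mult w) := by
      have heq : (∏ w, (f w * c) ^ (InfinitePlace.mult w)) =
          (∏ w, f w ^ (InfinitePlace.mult w)) * c ^ (finrank ℚ L) := by
        simp_rw [mul_pow, Finset.prod_mul_distrib, Finset.prod_pow_eq_pow_sum,
          sum_mult_eq]
      rw [heq]
      have hppos : 0 < ∏ w, f w ^ (InfinitePlace.mult w) := lt_of_lt_of_le hdiscr hf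
      have hcd : 1 < c ^ (finrank ℚ L) := one_lt_pow₀ hc1 hd.ne'
      calc NNReal.sqrt ‖NumberField.discr L‖₊ ≤ ∏ w, f w ^ (InfinitePlace.mult w) := hf
        _ < (∏ w, f w ^ (InfinitePlace.mult w)) * c ^ (finrank ℚ L) :=
          (lt_mul_iff_one_lt_right hppos).mpr hcd
    obtain ⟨a, ha, hwa⟩ := stmt15_auxA hreal _ hlt
    refine ⟨a, ha, fun w => ?_⟩
    have := hwa w
    rw [hc] at this
    push_cast at this
    convert this using 2
  choose a ha hwa using key
  set B : ℝ := 2 * ∑ w : InfinitePlace L, (f w : ℝ) with hB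
  have hmem : ∀ n : ℕ, (a n : L) ∈
      {x : L | IsIntegral ℤ x ∧ ∀ φ : L →+* ℂ, ‖φ x‖ ≤ B} := by
    intro n
    refine ⟨RingOfIntegers.isIntegral_coe (a n), fun φ => ?_⟩
    have h1 : ‖φ ((a n : L))‖ = (InfinitePlace.mk φ) (a n : L) := rfl
    rw [h1]
    have h2 := hwa n (InfinitePlace.mk φ)
    have h3 : (1 : ℝ) + ((n : ℝ) + 1)⁻¹ ≤ 2 := by
      have : ((n : ℝ) + 1)⁻¹ ≤ 1 := by
        rw [inv_le_one_iff₀]; right; linarith [Nat.cast_nonneg (α := ℝ) n]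
      linarith
    have h4 : (f (InfinitePlace.mk φ) : ℝ) ≤ ∑ w : InfinitePlace L, (f w : ℝ) :=
      Finset.single_le_sum (fun w _ => (f w).coe_nonneg) (Finset.mem_univ _)
    have h5 : (0 : ℝ) ≤ (f (InfinitePlace.mk φ) : ℝ) := (f _).coe_nonneg
    calc (InfinitePlace.mk φ) (a n : L)
        ≤ (f (InfinitePlace.mk φ) : ℝ) * (1 + ((n : ℝ) + 1)⁻¹) := (h2).le
      _ ≤ (f (InfinitePlace.mk φ) : ℝ) * 2 := by nlinarith
      _ ≤ B := by rw [hB]; nlinarith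
  have hfin : {x : L | IsIntegral ℤ x ∧ ∀ φ : L →+* ℂ, ‖φ x‖ ≤ B}.Finite :=
    NumberField.Embeddings.finite_of_norm_le L ℂ B
  haveI := hfin.to_subtype
  set F : ℕ → {x : L | IsIntegral ℤ x ∧ ∀ φ : L →+* ℂ, ‖φ x‖ ≤ B} :=
    fun n => ⟨(a n : L), hmem n⟩ with hF
  obtain ⟨y, hy⟩ := Finite.exists_infinite_fiber F
  have hSinf : (F ⁻¹' {y}).Infinite := Set.infinite_coe_iff.mp hy
  obtain ⟨n₀, hn₀⟩ := hSinf.nonempty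
  refine ⟨a n₀, ha n₀, fun w => ?_⟩
  by_contra hlt
  push_neg at hlt
  have hsub : (0 : ℝ) < (w (a n₀ : L) : ℝ) - f w := sub_pos.mpr hlt
  obtain ⟨Nb, hNb⟩ := exists_nat_gt ((f w : ℝ) / ((w (a n₀ : L) : ℝ) - f w))
  obtain ⟨n, hn, hNn⟩ := hSinf.exists_gt Nb
  have haeq : (a n : L) = (a n₀ : L) := by
    have : F n = F n₀ := by
      rw [Set.mem_preimage, Set.mem_singleton_iff] at hn hn₀
      rw [hn, hn₀]
    simpa [hF] using congrArg Subtype.val this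
  have h2 := hwa n w
  rw [haeq] at h2
  have hn1 : ((f w : ℝ) / ((w (a n₀ : L) : ℝ) - f w)) < (n : ℝ) + 1 := by
    have : (Nb : ℝ) ≤ (n : ℝ) := by exact_mod_cast hNn.le
    linarith
  have h6 : (f w : ℝ) < ((w (a n₀ : L) : ℝ) - f w) * ((n : ℝ) + 1) := by
    have := (div_lt_iff₀ hsub).mp hn1
    linarith [this]
  have hn2 : (0 : ℝ) < (n : ℝ) + 1 := by positivity
  have h7 : (f w : ℝ) * ((n : ℝ) + 1)⁻¹ < (w (a n₀ : L) : ℝ) - f w := by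
    rw [mul_inv_lt_iff₀ hn2]
    linarith [h6]
  nlinarith [h2, h7]

/-- Let `L` be a totally real number field of degree `d`, `N ⊇ L` a
number field, and `q ∈ N` a nonzero element with `q²` a unit of `𝓞 L`.  Then there is
a nonzero `h ∈ 𝓞 L` with `|σ (h q)| ≤ |Δ_L|^{1/(2d)}` for every embedding
`σ : N → ℂ`. -/
theorem stmt_15 (L : Type*) [Field L] [NumberField L]
    (htotreal : ∀ (σ : L →+* ℂ) (x : L), (σ x).im = 0)
    (N : Type*) [Field N] [NumberField N] [Algebra L N]
    (q : N) (hq : q ≠ 0) (u : (𝓞 L)ˣ)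
    (hu : q ^ 2 = algebraMap L N (((u : (𝓞 L)ˣ) : 𝓞 L) : L)) :
    ∃ h : 𝓞 L, h ≠ 0 ∧ ∀ σ : N →+* ℂ,
      ‖σ (algebraMap L N (h : L) * q)‖ ≤
        |(NumberField.discr L : ℝ)| ^ ((1 : ℝ) / (2 * Module.finrank ℚ L)) := by
  classical
  have hreal : ∀ w : InfinitePlace L, w.IsReal := by
    intro w
    rw [NumberField.InfinitePlace.isReal_iff, NumberField.ComplexEmbedding.isReal_iff]
    ext x
    exact Complex.conj_eq_iff_im.mpr (htotreal _ x)
  have hmult : ∀ w : InfinitePlace L, InfinitePlace.mult w = 1 := by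
    intro w
    simp [NumberField.InfinitePlace.mult, hreal w]
  set v : L := ((u : 𝓞 L) : L) with hv
  have hv0 : v ≠ 0 := by
    simpa [hv] using RingOfIntegers.coe_ne_zero_iff.mpr (Units.ne_zero u)
  have hwv : ∀ w : InfinitePlace L, (0 : ℝ) < w v :=
    fun w => NumberField.InfinitePlace.pos_iff.mpr hv0
  have hd : 0 < Module.finrank ℚ L := Module.finrank_pos
  have hDpos : (0 : ℝ) < |(NumberField.discr L : ℝ)| := by
    rw [abs_pos]
    exact_mod_cast NumberField.discr_ne_zero L
  set R : ℝ := |(NumberField.discr L : ℝ)| ^ ((1 : ℝ) / (2 * Module.finrank ℚ L)) with hRdef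
  have hR : 0 < R := Real.rpow_pos_of_pos hDpos _
  set f : InfinitePlace L → NNReal := fun w => Real.toNNReal (R / Real.sqrt (w v)) with hfdef
  have hfpos : ∀ w : InfinitePlace L, 0 < R / Real.sqrt (w v) :=
    fun w => div_pos hR (Real.sqrt_pos.mpr (hwv w))
  have hf0 : ∀ w : InfinitePlace L, f w ≠ 0 := fun w => (Real.toNNReal_pos.mpr (hfpos w)).ne'
  have hfcoe : ∀ w : InfinitePlace L, (f w : ℝ) = R / Real.sqrt (w v) :=
    fun w => Real.coe_toNNReal _ (hfpos w).le
  have hNorm : ∏ w : InfinitePlace L, (w v : ℝ) = 1 := by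
    have h1 := NumberField.InfinitePlace.prod_eq_abs_norm v
    simp_rw [hmult, pow_one] at h1
    rw [h1]
    have h2 : |Algebra.norm ℚ (v : L)| = 1 := NumberField.Units.norm (K := L) u
    exact_mod_cast congrArg (fun x : ℚ => (x : ℝ)) h2
  have hP : ∏ w : InfinitePlace L, Real.sqrt (w v) = 1 := by
    have hPnn : (0 : ℝ) ≤ ∏ w : InfinitePlace L, Real.sqrt (w v) :=
      Finset.prod_nonneg fun w _ => Real.sqrt_nonneg _
    have h2 : (∏ w : InfinitePlace L, Real.sqrt (w v)) ^ 2 = ∏ w : InfinitePlace L, (w v : ℝ) := by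
      rw [← Finset.prod_pow]
      exact Finset.prod_congr rfl fun w _ => Real.sq_sqrt (hwv w).le
    rw [← Real.sqrt_sq hPnn, h2, hNorm, Real.sqrt_one]
  have hcard : Fintype.card (InfinitePlace L) = Module.finrank ℚ L := by
    have h1 := NumberField.InfinitePlace.sum_mult_eq (K := L)
    simp_rw [hmult] at h1
    simpa using h1
  have hprodf : (∏ w : InfinitePlace L, f w ^ (InfinitePlace.mult w)) =
      NNReal.sqrt ‖NumberField.discr L‖₊ := by
    apply NNReal.coe_injective
    rw [NNReal.coe_prod]
    simp_rw [hmult, pow_one]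
    have hL : ∏ w : InfinitePlace L, (f w : ℝ) = R ^ Fintype.card (InfinitePlace L) := by
      simp_rw [hfcoe]
      rw [Finset.prod_div_distrib, hP, div_one, Finset.prod_const, Finset.card_univ]
    rw [hL, hcard]
    have hRd : R ^ (Module.finrank ℚ L) = Real.sqrt |(NumberField.discr L : ℝ)| := by
      rw [hRdef, ← Real.rpow_natCast _ (Module.finrank ℚ L), ← Real.rpow_mul hDpos.le]
      have hdne : ((Module.finrank ℚ L : ℝ)) ≠ 0 := by exact_mod_cast hd.ne'
      have : (1 : ℝ) / (2 * Module.finrank ℚ L) * (Module.finrank ℚ L) = 1 / 2 := by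
        field_simp
      rw [this, ← Real.sqrt_eq_rpow]
    rw [hRd, Real.coe_sqrt, coe_nnnorm, Int.norm_eq_abs]
  obtain ⟨h, hne, hhw⟩ := stmt15_auxB hreal f hf0 (le_of_eq hprodf.symm)
  refine ⟨h, hne, fun σ => ?_⟩
  set τ : L →+* ℂ := σ.comp (algebraMap L N) with hτ
  set w : InfinitePlace L := InfinitePlace.mk τ with hw
  have e1 : ‖σ (algebraMap L N (h : L) * q)‖ =
      (w ((h : L)) : ℝ) * ‖σ q‖ := by
    rw [map_mul, norm_mul]
    rfl
  have e2 : (‖σ q‖) ^ 2 = (w v : ℝ) := by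
    rw [← norm_pow, ← map_pow, hu]
    rfl
  have e3 : ‖σ q‖ = Real.sqrt (w v) := by
    rw [← e2, Real.sqrt_sq (norm_nonneg _)]
  rw [e1, e3]
  have h5 := hhw w
  rw [hfcoe w] at h5
  calc (w ((h : L)) : ℝ) * Real.sqrt (w v)
      ≤ (R / Real.sqrt (w v)) * Real.sqrt (w v) :=
        mul_le_mul_of_nonneg_right h5 (Real.sqrt_nonneg _)
    _ = R := div_mul_cancel₀ R (Real.sqrt_pos.mpr (hwv w)).ne'
end

section
/- Let K be a number field of degree n with r₁ real and r₂ complex places, and let j : K → ℝ^{r₁} × ℂ^{r₂} be the mixed embedding. Then there exists a point x ∈ ℝ^{r₁} × ℂ^{r₂} whose L² (Euclidean) distance to every point of the lattice j(O_K) is at least (1/2)·√(n/2). In particular the covering radius μ(K) of O_K satisfies μ(K) ≥ (1/2)·√(n/2). -/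
open NumberField

/-- The `L²` (Euclidean) distance on the mixed space `ℝ^{r₁} × ℂ^{r₂}` of a number
field, obtained by identifying each `ℂ` factor with `ℝ²`. -/
noncomputable def mixedDist (K : Type*) [Field K] [NumberField K]
    (x y : NumberField.mixedEmbedding.mixedSpace K) : ℝ :=
  letI : Fintype {w : InfinitePlace K // w.IsReal} := Fintype.ofFinite _
  letI : Fintype {w : InfinitePlace K // w.IsComplex} := Fintype.ofFinite _
  Real.sqrt ((∑ v, (x.1 v - y.1 v) ^ 2) + ∑ v, ‖x.2 v - y.2 v‖ ^ 2)

open NumberField.InfinitePlace NumberField.mixedEmbedding Finset Module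

section AuxLemmas

variable {K : Type*} [Field K] [NumberField K]

private lemma myDist_eq (β γ : K) :
    letI : Fintype {w : InfinitePlace K // w.IsReal} := Fintype.ofFinite _
    letI : Fintype {w : InfinitePlace K // w.IsComplex} := Fintype.ofFinite _
    mixedDist K (mixedEmbedding K β) (mixedEmbedding K γ) =
      Real.sqrt ((∑ v : {w : InfinitePlace K // w.IsReal}, (v.1 (β - γ)) ^ 2)
        + ∑ v : {w : InfinitePlace K // w.IsComplex}, (v.1 (β - γ)) ^ 2) := by
  rw [mixedDist]
  congr 1
  congr 1
  · refine Finset.sum_congr rfl fun v _ => ?_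
    rw [mixedEmbedding_apply_isReal, mixedEmbedding_apply_isReal, ← map_sub,
      ← sq_abs, ← Real.norm_eq_abs, norm_embedding_of_isReal]
  · refine Finset.sum_congr rfl fun v _ => ?_
    rw [mixedEmbedding_apply_isComplex, mixedEmbedding_apply_isComplex, ← map_sub,
      norm_embedding_eq]

set_option maxHeartbeats 2000000 in
private lemma key_ineq (α : K)
    (hα : ((1:ℝ)/2) ^ (finrank ℚ K) ≤ |(Algebra.norm ℚ α : ℝ)|) :
    letI : Fintype {w : InfinitePlace K // w.IsReal} := Fintype.ofFinite _
    letI : Fintype {w : InfinitePlace K // w.IsComplex} := Fintype.ofFinite _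
    (finrank ℚ K : ℝ) / 8 ≤ (∑ v : {w : InfinitePlace K // w.IsReal}, (v.1 α) ^ 2)
        + ∑ v : {w : InfinitePlace K // w.IsComplex}, (v.1 α) ^ 2 := by
  letI : Fintype {w : InfinitePlace K // w.IsReal} := Fintype.ofFinite _
  letI : Fintype {w : InfinitePlace K // w.IsComplex} := Fintype.ofFinite _
  set n := finrank ℚ K with hn
  have hn0 : 0 < n := finrank_pos
  have hnR : (0:ℝ) < n := by exact_mod_cast hn0
  -- AM-GM
  have hAM := Real.geom_mean_le_arith_mean_weighted Finset.univ
      (fun w : InfinitePlace K => (mult w : ℝ) / n) (fun w => (w α) ^ 2)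
      (fun i _ => by positivity)
      (by rw [← Finset.sum_div, div_eq_one_iff_eq hnR.ne']
          exact_mod_cast sum_mult_eq (K := K))
      (fun i _ => by positivity)
  -- compute the geometric mean
  have hgeom : (∏ w : InfinitePlace K, ((w α) ^ 2) ^ ((mult w : ℝ) / n))
      = (|(Algebra.norm ℚ α : ℝ)|) ^ ((2:ℝ)/n) := by
    have h1 : ∀ w : InfinitePlace K, ((w α) ^ 2) ^ ((mult w : ℝ) / n)
        = ((w α) ^ (mult w)) ^ ((2:ℝ)/n) := by
      intro w
      rw [← Real.rpow_natCast (w α) 2, ← Real.rpow_natCast (w α) (mult w),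
        ← Real.rpow_mul (apply_nonneg w α), ← Real.rpow_mul (apply_nonneg w α)]
      ring_nf
    simp_rw [h1]
    rw [Real.finset_prod_rpow _ _ (fun i _ => pow_nonneg (apply_nonneg i α) _),
      prod_eq_abs_norm, Rat.cast_abs]
  have h14 : (1:ℝ)/4 ≤ (|(Algebra.norm ℚ α : ℝ)|) ^ ((2:ℝ)/n) := by
    have h2n : (0:ℝ) ≤ (2:ℝ)/n := by positivity
    calc (1:ℝ)/4 = (((1:ℝ)/2) ^ (n:ℕ)) ^ ((2:ℝ)/n) := by
          rw [← Real.rpow_natCast ((1:ℝ)/2) n, ← Real.rpow_mul (by norm_num),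
            show ((n:ℝ) * (2/n)) = ((2:ℕ):ℝ) by field_simp; norm_num, Real.rpow_natCast]
          norm_num
      _ ≤ _ := Real.rpow_le_rpow (by positivity) hα h2n
  have hsum : ∑ w : InfinitePlace K, ((mult w : ℝ) / n) * (w α) ^ 2
      = (1/n) * ∑ w : InfinitePlace K, (mult w : ℝ) * (w α) ^ 2 := by
    rw [Finset.mul_sum]; exact Finset.sum_congr rfl fun w _ => by ring
  have hmain : (n:ℝ)/4 ≤ ∑ w : InfinitePlace K, (mult w : ℝ) * (w α) ^ 2 := by
    have h := (h14.trans (hgeom ▸ hAM))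
    rw [hsum] at h
    have h2 := mul_le_mul_of_nonneg_left h (le_of_lt hnR)
    calc (n:ℝ)/4 = n * (1/4) := by ring
      _ ≤ n * (1/n * ∑ w : InfinitePlace K, (mult w : ℝ) * (w α) ^ 2) := h2
      _ = _ := by field_simp
  -- split the sum
  have hsplit : ∑ w : InfinitePlace K, (w α : ℝ) ^ 2
      = (∑ v : {w : InfinitePlace K // w.IsReal}, (v.1 α) ^ 2)
        + ∑ v : {w : InfinitePlace K // w.IsComplex}, (v.1 α) ^ 2 := by
    classical
    rw [← Fintype.sum_subtype_add_sum_subtype (fun w : InfinitePlace K => w.IsReal)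
      (fun w => (w α : ℝ) ^ 2)]
    congr 1
    · congr!
    · refine Fintype.sum_equiv (Equiv.subtypeEquivRight ?_) _ _ (fun _ => rfl)
      exact fun w => not_isReal_iff_isComplex
  have hle : ∑ w : InfinitePlace K, (mult w : ℝ) * (w α) ^ 2
      ≤ 2 * ∑ w : InfinitePlace K, (w α : ℝ) ^ 2 := by
    rw [Finset.mul_sum]
    refine Finset.sum_le_sum fun w _ => ?_
    have : (mult w : ℝ) ≤ 2 := by
      rw [mult]; split_ifs <;> norm_num
    exact mul_le_mul_of_nonneg_right this (sq_nonneg _)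
  rw [← hsplit]
  linarith [hmain, hle]

private lemma norm_lower_bound (a : 𝓞 K) :
    ((1:ℝ)/2) ^ (finrank ℚ K) ≤ |(Algebra.norm ℚ ((2:K)⁻¹ - (a : K)) : ℝ)| := by
  set n := finrank ℚ K with hn
  have hb : (1 : 𝓞 K) - 2 * a ≠ 0 := by
    intro h
    have h' : (((1 - 2 * a : 𝓞 K) : K)) = 0 := by rw [h]; simp
    push_cast [map_ofNat] at h'
    have ha2 : (a : K) = algebraMap ℚ K (1/2) := by
      rw [map_div₀, map_one, eq_div_iff (by norm_num : (algebraMap ℚ K 2) ≠ 0), map_ofNat]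
      linear_combination -h'
    have hint : IsIntegral ℤ ((1:ℚ)/2) := by
      rw [← isIntegral_algebraMap_iff (algebraMap ℚ K).injective]
      rw [← ha2]
      exact RingOfIntegers.isIntegral_coe a
    obtain ⟨y, hy⟩ := IsIntegrallyClosed.isIntegral_iff.mp hint
    have : (2 * y : ℚ) = 1 := by
      rw [show ((y : ℤ) : ℚ) = (1:ℚ)/2 from hy] ; ring
    have : (2 * y : ℤ) = 1 := by exact_mod_cast this
    omega
  have h1 : (1:ℚ) ≤ |(Algebra.norm ℚ (((1 : 𝓞 K) - 2 * a : 𝓞 K) : K))| := by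
    rw [← Algebra.coe_norm_int]
    exact_mod_cast Int.one_le_abs (Algebra.norm_ne_zero_iff.mpr hb)
  have h2 : (((1 : 𝓞 K) - 2 * a : 𝓞 K) : K) = (2 : K) * ((2:K)⁻¹ - (a : K)) := by
    push_cast [map_ofNat]
    rw [mul_sub, mul_inv_cancel₀ (by norm_num : (2:K) ≠ 0)]
  have h3 : Algebra.norm ℚ ((2:K)) = 2 ^ n := by
    rw [show (2:K) = algebraMap ℚ K 2 by norm_num, Algebra.norm_algebraMap]
  have h4 : (1:ℚ) ≤ 2 ^ n * |Algebra.norm ℚ ((2:K)⁻¹ - (a : K))| := by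
    calc (1:ℚ) ≤ _ := h1
      _ = 2 ^ n * |Algebra.norm ℚ ((2:K)⁻¹ - (a : K))| := by
        rw [h2, map_mul, h3, abs_mul]
        congr 1
        rw [abs_of_nonneg]
        positivity
  have h5 : ((1:ℚ)/2) ^ n ≤ |Algebra.norm ℚ ((2:K)⁻¹ - (a : K))| := by
    rw [div_pow, one_pow, div_le_iff₀ (by positivity), mul_comm]
    linarith
  calc ((1:ℝ)/2) ^ n = ((((1:ℚ)/2) ^ n : ℚ) : ℝ) := by push_cast; norm_num
    _ ≤ _ := by rw [← Rat.cast_abs]; exact_mod_cast h5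

private lemma mixedDist_nonneg (x y : mixedSpace K) : 0 ≤ mixedDist K x y :=
  Real.sqrt_nonneg _

private lemma sqrt_aux {i1 i2 : Type*} [Fintype i1] [Fintype i2] (f : i1 → ℝ) (g : i2 → ℝ)
    (r : ℝ) (hr : 0 ≤ r) (hf : ∀ i, |f i| ≤ r) (hg : ∀ i, 0 ≤ g i) (hg' : ∀ i, g i ≤ r) :
    Real.sqrt ((∑ i, f i ^ 2) + ∑ i, g i ^ 2)
      ≤ Real.sqrt ((Nat.card i1 : ℝ) + Nat.card i2) * r := by
  rw [← Real.sqrt_sq hr, ← Real.sqrt_mul (by positivity : (0:ℝ) ≤ (Nat.card i1 : ℝ) + Nat.card i2)]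
  apply Real.sqrt_le_sqrt
  have h1 : ∑ i, f i ^ 2 ≤ (Nat.card i1 : ℝ) * r ^ 2 := by
    rw [Nat.card_eq_fintype_card, ← Finset.card_univ, ← nsmul_eq_mul, ← Finset.sum_const]
    refine Finset.sum_le_sum fun i _ => ?_
    calc f i ^ 2 = |f i| ^ 2 := (sq_abs _).symm
      _ ≤ r ^ 2 := pow_le_pow_left₀ (abs_nonneg _) (hf i) 2
  have h2 : ∑ i, g i ^ 2 ≤ (Nat.card i2 : ℝ) * r ^ 2 := by
    rw [Nat.card_eq_fintype_card, ← Finset.card_univ, ← nsmul_eq_mul, ← Finset.sum_const]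
    refine Finset.sum_le_sum fun i _ => ?_
    have := hg i
    have := hg' i
    nlinarith
  linarith

set_option maxHeartbeats 1000000 in
open scoped Classical in
private lemma exists_bound : ∃ C : ℝ, 0 ≤ C ∧
    ∀ x y : mixedSpace K, mixedDist K x y ≤ C * ‖x - y‖ := by
  refine ⟨Real.sqrt ((Nat.card {w : InfinitePlace K // w.IsReal} : ℝ)
      + Nat.card {w : InfinitePlace K // w.IsComplex}), Real.sqrt_nonneg _, fun x y => ?_⟩
  rw [mixedDist]
  refine @sqrt_aux _ _ (Fintype.ofFinite _) (Fintype.ofFinite _) _ _ ‖x - y‖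
    (norm_nonneg _) (fun v => ?_) (fun v => norm_nonneg _) (fun v => ?_)
  · calc |x.1 v - y.1 v| = ‖(x - y).1 v‖ := rfl
      _ ≤ ‖(x - y).1‖ := norm_le_pi_norm _ v
      _ ≤ ‖x - y‖ := norm_fst_le _
  · calc ‖x.2 v - y.2 v‖ = ‖(x - y).2 v‖ := rfl
      _ ≤ ‖(x - y).2‖ := norm_le_pi_norm _ v
      _ ≤ ‖x - y‖ := norm_snd_le _

set_option maxHeartbeats 1000000 in
open scoped Classical in
private lemma inf_bounded : ∃ M : ℝ, ∀ x : mixedSpace K,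
    (⨅ a : 𝓞 K, mixedDist K x (mixedEmbedding K (a : K))) ≤ M := by
  obtain ⟨C, hC0, hC⟩ := exists_bound (K := K)
  refine ⟨C * (∑ i, (1/2) * ‖latticeBasis K i‖), fun x => ?_⟩
  set c := (latticeBasis K).repr x with hc
  set a : 𝓞 K := ∑ i, round (c i) • (RingOfIntegers.basis K i) with ha
  have hja : mixedEmbedding K (a : K) = ∑ i, round (c i) • latticeBasis K i := by
    have : (a : K) = ∑ i, round (c i) • (integralBasis K i) := by
      rw [ha]
      push_cast [map_sum, map_zsmul]
      simp only [integralBasis_apply]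
    rw [this, map_sum]
    exact Finset.sum_congr rfl fun i _ => by
      rw [map_zsmul, latticeBasis_apply]
  have hdiff : x - mixedEmbedding K (a : K)
      = ∑ i, (c i - (round (c i) : ℝ)) • latticeBasis K i := by
    rw [hja]
    conv_lhs => rw [← Basis.sum_repr (latticeBasis K) x]
    rw [← Finset.sum_sub_distrib]
    refine Finset.sum_congr rfl fun i _ => ?_
    rw [sub_smul, Int.cast_smul_eq_zsmul]
  have hnorm : ‖x - mixedEmbedding K (a : K)‖ ≤ ∑ i, (1/2) * ‖latticeBasis K i‖ := by
    rw [hdiff]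
    refine (norm_sum_le _ _).trans (Finset.sum_le_sum fun i _ => ?_)
    rw [_root_.norm_smul, Real.norm_eq_abs]
    exact mul_le_mul_of_nonneg_right (abs_sub_round _) (norm_nonneg _)
  refine ciInf_le_of_le ⟨0, fun r hr => ?_⟩ a ?_
  · obtain ⟨b, rfl⟩ := hr
    exact mixedDist_nonneg _ _
  · exact (hC _ _).trans (mul_le_mul_of_nonneg_left hnorm hC0)

end AuxLemmas

/-- Let `K` be a number field of degree `n` with mixed embedding
`j : K → ℝ^{r₁} × ℂ^{r₂}`.  There is a point of the mixed space whose `L²` distance to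
every point of the lattice `j(𝓞 K)` is at least `(1/2)·√(n/2)`; in particular the
covering radius `μ(K) = ⨆ x, ⨅ a, dist x (j a)` satisfies `μ(K) ≥ (1/2)·√(n/2)`. -/
theorem stmt_17 (K : Type*) [Field K] [NumberField K] :
    (∃ x : NumberField.mixedEmbedding.mixedSpace K, ∀ a : 𝓞 K,
      (1 / 2) * Real.sqrt ((Module.finrank ℚ K : ℝ) / 2) ≤
        mixedDist K x (mixedEmbedding K (a : K))) ∧
    (1 / 2) * Real.sqrt ((Module.finrank ℚ K : ℝ) / 2) ≤
      ⨆ x : NumberField.mixedEmbedding.mixedSpace K,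
        ⨅ a : 𝓞 K, mixedDist K x (mixedEmbedding K (a : K)) := by
  have heq : (1/2 : ℝ) * Real.sqrt ((finrank ℚ K : ℝ)/2)
      = Real.sqrt ((finrank ℚ K : ℝ)/8) := by
    rw [show ((finrank ℚ K : ℝ))/8 = (1/4) * ((finrank ℚ K : ℝ)/2) by ring,
      Real.sqrt_mul (by norm_num),
      show Real.sqrt (1/4) = 1/2 by
        rw [show (1/4:ℝ) = (1/2)^2 by norm_num, Real.sqrt_sq (by norm_num)]]
  have hx0 : ∀ a : 𝓞 K, (1/2 : ℝ) * Real.sqrt ((finrank ℚ K : ℝ)/2)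
      ≤ mixedDist K (mixedEmbedding K ((2:K)⁻¹)) (mixedEmbedding K (a : K)) := by
    intro a
    have key := key_ineq ((2:K)⁻¹ - (a : K)) (norm_lower_bound a)
    rw [myDist_eq, heq]
    exact Real.sqrt_le_sqrt key
  refine ⟨⟨mixedEmbedding K ((2:K)⁻¹), hx0⟩, ?_⟩
  obtain ⟨M, hM⟩ := inf_bounded (K := K)
  have hbdd : BddAbove (Set.range fun x : mixedSpace K =>
      ⨅ a : 𝓞 K, mixedDist K x (mixedEmbedding K (a : K))) := by
    refine ⟨M, fun r hr => ?_⟩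
    obtain ⟨x, rfl⟩ := hr
    exact hM x
  calc (1/2 : ℝ) * Real.sqrt ((finrank ℚ K : ℝ)/2)
      ≤ ⨅ a : 𝓞 K, mixedDist K (mixedEmbedding K ((2:K)⁻¹)) (mixedEmbedding K (a : K)) :=
        le_ciInf hx0
    _ ≤ _ := le_ciSup hbdd (mixedEmbedding K ((2:K)⁻¹))
end

section
/- Let K be a number field of degree n with r₁ real and r₂ complex places, with mixed embedding j : K → ℝ^{r₁} × ℂ^{r₂}, and let μ > 0 be a real number such that every point of ℝ^{r₁} × ℂ^{r₂} lies within L² (Euclidean) distance μ of the lattice j(O_K). Then 2^{-r₂}·|Δ_K|^{1/2} ≤ μⁿ · π^{n/2} / Γ(n/2 + 1), where Γ is the Gamma function. -/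
open NumberField

open scoped Classical in
open MeasureTheory NumberField.mixedEmbedding in
private theorem mixedDist_eq_dist (K : Type*) [Field K] [NumberField K]
    (x y : euclidean.mixedSpace K) :
    mixedDist K (euclidean.toMixed K x) (euclidean.toMixed K y) = dist x y := by
  rw [mixedDist, WithLp.prod_dist_eq_of_L2, EuclideanSpace.dist_eq, EuclideanSpace.dist_eq,
    Real.sq_sqrt (by positivity), Real.sq_sqrt (by positivity)]
  congr 1
  · congr 1
    · exact Finset.sum_congr (by congr!) fun v _ => by
        rw [Real.dist_eq, sq_abs]; rfl
    · exact Finset.sum_congr (by congr!) fun v _ => by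
        rw [Complex.dist_eq]; rfl

set_option maxHeartbeats 1000000 in
set_option synthInstance.maxHeartbeats 1000000 in
/-- Let `K` be a number field of degree `n` with `r₂` complex places
and mixed embedding `j`, and let `μ > 0` be such that every point of the mixed space is
within `L²` distance `μ` of the lattice `j(𝓞 K)`.  Then
`2^{-r₂} |Δ_K|^{1/2} ≤ μ^n π^{n/2} / Γ(n/2 + 1)`. -/
theorem stmt_18 (K : Type*) [Field K] [NumberField K] (μ : ℝ) (hμ : 0 < μ)
    (hcov : ∀ x : NumberField.mixedEmbedding.mixedSpace K,
      ∃ a : 𝓞 K, mixedDist K x (mixedEmbedding K (a : K)) ≤ μ) :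
    ((2 : ℝ) ^ (Nat.card {w : InfinitePlace K // w.IsComplex}))⁻¹ *
        Real.sqrt |(NumberField.discr K : ℝ)| ≤
      μ ^ (Module.finrank ℚ K) *
        Real.pi ^ ((Module.finrank ℚ K : ℝ) / 2) /
          Real.Gamma ((Module.finrank ℚ K : ℝ) / 2 + 1) := by
  classical
  open scoped Pointwise in
  open MeasureTheory NumberField.mixedEmbedding ZSpan in
  set n := Module.finrank ℚ K with hn'
  set L := euclidean.integerLattice K with hL
  -- transfer the covering hypothesis to the euclidean mixed space
  have hcov2 : ∀ x : euclidean.mixedSpace K, ∃ l : L, dist x (l : euclidean.mixedSpace K) ≤ μ := by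
    intro x
    obtain ⟨a, ha⟩ := hcov (euclidean.toMixed K x)
    have hmem : (euclidean.toMixed K).symm (mixedEmbedding K (a : K)) ∈ L := by
      have h1 : euclidean.toMixed K ((euclidean.toMixed K).symm (mixedEmbedding K (a : K))) ∈
          NumberField.mixedEmbedding.integerLattice K := by
        rw [(euclidean.toMixed K).apply_symm_apply]
        exact ⟨a, rfl⟩
      exact h1
    refine ⟨⟨_, hmem⟩, ?_⟩
    rw [← mixedDist_eq_dist]
    simpa using ha
  -- the fundamental domain
  let b := Module.Free.chooseBasis ℤ L
  haveI : Countable L := Countable.of_equiv _ b.repr.toEquiv.symm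
  set F := fundamentalDomain (Module.Basis.ofZLatticeBasis ℝ L b) with hF
  have hFD : IsAddFundamentalDomain L F := ZLattice.isAddFundamentalDomain b volume
  set B := Metric.closedBall (0 : euclidean.mixedSpace K) μ with hB
  have hcover : ∀ x : euclidean.mixedSpace K, x ∈ ⋃ l : L, l +ᵥ B := by
    intro x
    obtain ⟨l, hl⟩ := hcov2 x
    refine Set.mem_iUnion.2 ⟨l, ?_⟩
    rw [Set.mem_vadd_set_iff_neg_vadd_mem, hB, Metric.mem_closedBall, dist_zero_right]
    have : (-l : L) +ᵥ x = x - (l : euclidean.mixedSpace K) := by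
      show -(l : euclidean.mixedSpace K) + x = _
      abel
    rw [this, ← dist_eq_norm]
    exact hl
  -- covering radius bound: volume of the fundamental domain ≤ volume of the ball
  haveI : MeasurableVAdd L (euclidean.mixedSpace K) :=
    (inferInstance : MeasurableVAdd L.toAddSubgroup (euclidean.mixedSpace K))
  haveI : VAddInvariantMeasure L (euclidean.mixedSpace K) volume :=
    (inferInstance : VAddInvariantMeasure L.toAddSubgroup (euclidean.mixedSpace K) volume)
  have hvol : volume F ≤ volume B := by
    calc volume F = volume (F ∩ ⋃ l : L, l +ᵥ B) := by
          rw [Set.inter_eq_left.mpr fun x _ => hcover x]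
      _ = volume (⋃ l : L, F ∩ (l +ᵥ B)) := by rw [Set.inter_iUnion]
      _ ≤ ∑' l : L, volume (F ∩ (l +ᵥ B)) := measure_iUnion_le _
      _ = ∑' l : L, volume ((l +ᵥ B) ∩ F) := by simp_rw [Set.inter_comm]
      _ = volume B := (hFD.measure_eq_tsum B).symm
  -- volume of the ball
  have hrk : Module.finrank ℝ (euclidean.mixedSpace K) = n := euclidean.finrank K
  have hGpos : 0 < Real.Gamma ((n : ℝ) / 2 + 1) :=
    Real.Gamma_pos_of_pos (by positivity)
  have hBvol : volume B = ENNReal.ofReal (μ ^ n) *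
      ENNReal.ofReal (Real.sqrt Real.pi ^ n / Real.Gamma ((n : ℝ) / 2 + 1)) := by
    rw [hB, InnerProductSpace.volume_closedBall, hrk, ← ENNReal.ofReal_pow hμ.le]
  -- covolume computation
  have hcovol : ZLattice.covolume L = (2⁻¹ : ℝ) ^ InfinitePlace.nrComplexPlaces K *
      Real.sqrt |((discr K : ℤ) : ℝ)| := by
    rw [hL, euclidean.integerLattice,
      ZLattice.covolume_comap _ _ _ (euclidean.volumePreserving_toMixed K),
      covolume_integerLattice]
  have hBne : volume B ≠ ⊤ := (measure_closedBall_lt_top).ne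
  have hsqrtpi : Real.sqrt Real.pi ^ n = Real.pi ^ ((n : ℝ) / 2) := by
    rw [Real.sqrt_eq_rpow, ← Real.rpow_natCast (Real.pi ^ ((1 : ℝ)/2)) n,
      ← Real.rpow_mul Real.pi_pos.le, one_div, inv_mul_eq_div]
  calc ((2 : ℝ) ^ (Nat.card {w : InfinitePlace K // w.IsComplex}))⁻¹ *
        Real.sqrt |(NumberField.discr K : ℝ)| = ZLattice.covolume L := by
        have hcard : Nat.card {w : InfinitePlace K // w.IsComplex} =
            InfinitePlace.nrComplexPlaces K :=
          (Nat.card_eq_fintype_card).trans (by congr!)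
        rw [hcovol, hcard, ← inv_pow]
    _ = (volume F).toReal := ZLattice.covolume_eq_measure_fundamentalDomain L volume hFD
    _ ≤ (volume B).toReal := ENNReal.toReal_mono hBne hvol
    _ = μ ^ n * (Real.sqrt Real.pi ^ n / Real.Gamma ((n : ℝ) / 2 + 1)) := by
        rw [hBvol, ENNReal.toReal_mul, ENNReal.toReal_ofReal (by positivity),
          ENNReal.toReal_ofReal (by positivity)]
    _ = μ ^ n * Real.pi ^ ((n : ℝ) / 2) / Real.Gamma ((n : ℝ) / 2 + 1) := by
        rw [hsqrtpi, mul_div_assoc]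
end
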